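/- arXiv:1210.6472 — 6 statements merged into one kernel-verified Lean document; each statement's English description precedes it below -/
import Mathlib

section
/- Let m be a nonzero, nonnegative, locally finite Borel measure on ℝ such that for every b > 0, supp m ∩ (−∞,−b] ≠ ∅ and supp m ∩ [b,∞) ≠ ∅. Then Ψ is a nonnegative convex function on ℝ with Ψ(0) = 0, and there exists a constant C₁ > 0 such that |x| ≤ C₁(Ψ(x) + 1) for all x ∈ ℝ. -/
open MeasureTheory Set Function Filter

noncomputable section

/-- The (topological) support of a Borel measure on `ℝ`. -/
def mSupp (m : Measure ℝ) : Set ℝ :=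
  {x : ℝ | ∀ ε > (0:ℝ), 0 < m (Ioo (x - ε) (x + ε))}

/-- The support of `m` reaches below `-b` and above `b`, for every `b > 0`. -/
def SuppCond (m : Measure ℝ) : Prop :=
  ∀ b > (0:ℝ), (mSupp m ∩ Iic (-b)).Nonempty ∧ (mSupp m ∩ Ici b).Nonempty

/-- `Φ(x) = 2∫_{[0,x)} y m(dy)` for `x ≥ 0`, `Φ(x) = 2∫_{[x,0)} y m(dy)` for `x < 0`. -/
def Phi (m : Measure ℝ) (x : ℝ) : ℝ :=
  if 0 ≤ x then 2 * ∫ y in Ico (0:ℝ) x, y ∂m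
  else 2 * ∫ y in Ico x (0:ℝ), y ∂m

/-- `Ψ(x) = ∫_0^x Φ(y) dy`. -/
def Psi (m : Measure ℝ) (x : ℝ) : ℝ := ∫ y in (0:ℝ)..x, Phi m y

/-- `g(x) = o(Ψ(x))` as `|x| → ∞`. -/
def LittleOPsi (m : Measure ℝ) (g : ℝ → ℝ) : Prop :=
  ∀ ε > (0:ℝ), ∃ R : ℝ, ∀ x : ℝ, R ≤ |x| → |g x| ≤ ε * Psi m x

/-- `U(x,t) = o(Ψ(x))` as `|x| → ∞`, locally uniformly in `t ≥ 0`. -/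
def GrowthLocUnif (m : Measure ℝ) (U : ℝ → ℝ → ℝ) : Prop :=
  ∀ T > (0:ℝ), ∀ ε > (0:ℝ), ∃ R : ℝ,
    ∀ x t : ℝ, R ≤ |x| → t ∈ Icc (0:ℝ) T → |U x t| ≤ ε * Psi m x

/-- `f(x,t) = o(Ψ(x))` as `|x| → ∞`, uniformly in `t ∈ [0,T]`. -/
def GrowthUnif (m : Measure ℝ) (T : ℝ) (f : ℝ → ℝ → ℝ) : Prop :=
  ∀ ε > (0:ℝ), ∃ R : ℝ,
    ∀ x t : ℝ, R ≤ |x| → t ∈ Icc (0:ℝ) T → |f x t| ≤ ε * Psi m x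

/-- `U` solves `2 m U_t = U_xx` in the sense of distributions on `ℝ × (0,∞)`:
`-2∫∫ U ∂_t φ m(dx) dt = ∫∫ U ∂_xx φ dx dt` for every smooth compactly supported
test function `φ` supported in `ℝ × (0,∞)`. -/
def SolvesHeat (m : Measure ℝ) (U : ℝ → ℝ → ℝ) : Prop :=
  ∀ φ : ℝ → ℝ → ℝ,
    ContDiff ℝ (⊤ : ℕ∞) (uncurry φ) →
    HasCompactSupport (uncurry φ) →
    tsupport (uncurry φ) ⊆ univ ×ˢ Ioi (0:ℝ) →
    (-2) * (∫ x, (∫ t in Ioi (0:ℝ), U x t * deriv (φ x) t) ∂m)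
      = ∫ x, ∫ t in Ioi (0:ℝ), U x t * iteratedDeriv 2 (fun y => φ y t) x

/-- `f = ḡ`: the continuous function agreeing with `g` on `supp m`, and affine on each
open interval disjoint from `supp m` (linear interpolation between the endpoint values). -/
def IsBarExt (m : Measure ℝ) (g f : ℝ → ℝ) : Prop :=
  Continuous f ∧ (∀ x ∈ mSupp m, f x = g x) ∧
  ∀ a b : ℝ, a < b → Ioo a b ∩ mSupp m = ∅ →
    ∀ x ∈ Icc a b, f x = ((b - x) / (b - a)) * f a + ((x - a) / (b - a)) * f b

/-- The martingale condition `∫_{(−∞,x)} |y| m(dy) = ∫_{(x,∞)} |y| m(dy) = ∞`. -/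
def MartCond (m : Measure ℝ) : Prop :=
  ∀ x : ℝ, (∫⁻ y in Iio x, (‖y‖₊ : ENNReal) ∂m = ⊤) ∧
           (∫⁻ y in Ioi x, (‖y‖₊ : ENNReal) ∂m = ⊤)

/-- `f` is locally Lipschitz on the set `s`. -/
def LocLipOn (f : ℝ × ℝ → ℝ) (s : Set (ℝ × ℝ)) : Prop :=
  ∀ p ∈ s, ∃ ε > (0:ℝ), ∃ K : NNReal, LipschitzOnWith K f (Metric.ball p ε ∩ s)

section Helpers
set_option linter.unusedSectionVars false

variable (m : Measure ℝ) [IsLocallyFiniteMeasure m]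

lemma id_intOn (a b : ℝ) : IntegrableOn (fun y : ℝ => y) (Ico a b) m :=
  (continuous_id.continuousOn.integrableOn_compact isCompact_Icc).mono_set Ico_subset_Icc_self

lemma phi_zero : Phi m 0 = 0 := by simp [Phi]

lemma phi_mono : Monotone (Phi m) := by
  intro x x' h
  rcases le_or_gt 0 x with hx | hx
  · have hx' : 0 ≤ x' := hx.trans h
    rw [Phi, if_pos hx, Phi, if_pos hx']
    have key : ∫ y in Ico (0:ℝ) x, y ∂m ≤ ∫ y in Ico (0:ℝ) x', y ∂m := by
      apply setIntegral_mono_set (id_intOn m 0 x') ?_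
        (HasSubset.Subset.eventuallyLE (Ico_subset_Ico_right h))
      filter_upwards [ae_restrict_mem measurableSet_Ico] with y hy using hy.1
    linarith
  · rcases le_or_gt 0 x' with hx' | hx'
    · rw [Phi, if_neg (not_le.2 hx), Phi, if_pos hx']
      have h1 : ∫ y in Ico x 0, y ∂m ≤ 0 :=
        setIntegral_nonpos measurableSet_Ico (fun y hy => le_of_lt hy.2)
      have h2 : 0 ≤ ∫ y in Ico (0:ℝ) x', y ∂m :=
        setIntegral_nonneg measurableSet_Ico (fun y hy => hy.1)
      linarith
    · rw [Phi, if_neg (not_le.2 hx), Phi, if_neg (not_le.2 hx')]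
      have key : ∫ y in Ico x' 0, (fun y : ℝ => -y) y ∂m ≤ ∫ y in Ico x 0, (fun y : ℝ => -y) y ∂m := by
        apply setIntegral_mono_set ((id_intOn m x 0).neg) ?_
          (HasSubset.Subset.eventuallyLE (Ico_subset_Ico_left h))
        filter_upwards [ae_restrict_mem measurableSet_Ico] with y hy
        simpa using hy.2.le
      have e1 : ∫ y in Ico x 0, -y ∂m = -∫ y in Ico x 0, y ∂m :=
        integral_neg (f := fun y : ℝ => y)
      have e2 : ∫ y in Ico x' 0, -y ∂m = -∫ y in Ico x' 0, y ∂m :=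
        integral_neg (f := fun y : ℝ => y)
      simp only [e1, e2] at key
      linarith

lemma phi_intble (a b : ℝ) : IntervalIntegrable (Phi m) volume a b :=
  (phi_mono m).intervalIntegrable

lemma psi_nonneg (x : ℝ) : 0 ≤ Psi m x := by
  rcases le_or_gt 0 x with hx | hx
  · apply intervalIntegral.integral_nonneg hx
    intro u hu
    have := phi_mono m hu.1
    rwa [phi_zero] at this
  · have hs : Psi m x = -(∫ y in x..(0:ℝ), Phi m y) := by
      rw [Psi, intervalIntegral.integral_symm]
    have h2 : ∫ y in x..(0:ℝ), Phi m y ≤ ∫ y in x..(0:ℝ), (0:ℝ) := by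
      apply intervalIntegral.integral_mono_on hx.le (phi_intble m x 0) intervalIntegrable_const
      intro u hu
      have := phi_mono m hu.2
      rwa [phi_zero] at this
    simp only [intervalIntegral.integral_const, smul_zero] at h2
    linarith

lemma psi_convex : ConvexOn ℝ univ (Psi m) := by
  apply convexOn_of_slope_mono_adjacent convex_univ
  intro x y z _ _ hxy hyz
  have hxy' : (0:ℝ) < y - x := by linarith
  have hyz' : (0:ℝ) < z - y := by linarith
  have h1 : Psi m y - Psi m x ≤ (y - x) * Phi m y := by
    rw [Psi, Psi, intervalIntegral.integral_interval_sub_left (phi_intble m 0 y) (phi_intble m 0 x)]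
    calc ∫ u in x..y, Phi m u ≤ ∫ u in x..y, Phi m y :=
          intervalIntegral.integral_mono_on hxy.le (phi_intble m x y) intervalIntegrable_const
            (fun u hu => phi_mono m hu.2)
      _ = (y - x) * Phi m y := by
          rw [intervalIntegral.integral_const, smul_eq_mul]
  have h2 : (z - y) * Phi m y ≤ Psi m z - Psi m y := by
    rw [Psi, Psi, intervalIntegral.integral_interval_sub_left (phi_intble m 0 z) (phi_intble m 0 y)]
    calc (z - y) * Phi m y = ∫ u in y..z, Phi m y := by
          rw [intervalIntegral.integral_const, smul_eq_mul]
      _ ≤ ∫ u in y..z, Phi m u :=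
          intervalIntegral.integral_mono_on hyz.le intervalIntegrable_const (phi_intble m y z)
            (fun u hu => phi_mono m hu.1)
  have l1 : (Psi m y - Psi m x) / (y - x) ≤ Phi m y := by
    rw [div_le_iff₀ hxy', mul_comm]; linarith
  have l2 : Phi m y ≤ (Psi m z - Psi m y) / (z - y) := by
    rw [le_div_iff₀ hyz', mul_comm]; linarith
  linarith

lemma psi_lb_pos (c a : ℝ) (hc : ∀ x ≥ a, c ≤ Phi m x) (x : ℝ) (hx : a ≤ x) :
    c * (x - a) ≤ Psi m x := by
  have h1 : Psi m x = Psi m a + ∫ u in a..x, Phi m u := by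
    rw [Psi, Psi, intervalIntegral.integral_add_adjacent_intervals (phi_intble m 0 a) (phi_intble m a x)]
  have h2 : c * (x - a) ≤ ∫ u in a..x, Phi m u := by
    calc c * (x - a) = ∫ _u in a..x, c := by
          rw [intervalIntegral.integral_const, smul_eq_mul, mul_comm]
      _ ≤ ∫ u in a..x, Phi m u :=
          intervalIntegral.integral_mono_on hx intervalIntegrable_const (phi_intble m a x)
            (fun u hu => hc u hu.1)
  have := psi_nonneg m a
  linarith

lemma psi_lb_neg (c a : ℝ) (hc : ∀ x ≤ a, Phi m x ≤ -c) (x : ℝ) (hx : x ≤ a) :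
    c * (a - x) ≤ Psi m x := by
  have h1 : Psi m a = Psi m x + ∫ u in x..a, Phi m u := by
    rw [Psi, Psi, intervalIntegral.integral_add_adjacent_intervals (phi_intble m 0 x) (phi_intble m x a)]
  have h2 : ∫ u in x..a, Phi m u ≤ (-c) * (a - x) := by
    calc ∫ u in x..a, Phi m u ≤ ∫ _u in x..a, (-c) :=
          intervalIntegral.integral_mono_on hx (phi_intble m x a) intervalIntegrable_const
            (fun u hu => hc u hu.2)
      _ = (-c) * (a - x) := by rw [intervalIntegral.integral_const, smul_eq_mul, mul_comm]
  have := psi_nonneg m a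
  linarith

lemma phi_lb (p : ℝ) (hp : 1 ≤ p) {x : ℝ} (hx : p + 2⁻¹ ≤ x) :
    (m (Ioo (p - 2⁻¹) (p + 2⁻¹))).toReal ≤ Phi m x := by
  set s := Ioo (p - 2⁻¹) (p + 2⁻¹) with hs
  have hfin : m s ≠ ⊤ :=
    ((measure_mono Ioo_subset_Icc_self).trans_lt measure_Icc_lt_top).ne
  have h0x : (0:ℝ) ≤ x := by linarith
  rw [Phi, if_pos h0x]
  have hsub : s ⊆ Ico 0 x := by
    intro y hy
    rw [hs] at hy
    exact ⟨by linarith [hy.1], by linarith [hy.2]⟩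
  have h1 : (p - 2⁻¹) * (m s).toReal ≤ ∫ y in s, y ∂m :=
    setIntegral_ge_of_const_le_real measurableSet_Ioo hfin (fun y hy => hy.1.le)
      ((id_intOn m 0 x).mono_set hsub)
  have h2 : ∫ y in s, y ∂m ≤ ∫ y in Ico (0:ℝ) x, y ∂m := by
    apply setIntegral_mono_set (id_intOn m 0 x) ?_ hsub.eventuallyLE
    filter_upwards [ae_restrict_mem measurableSet_Ico] with y hy using hy.1
  have h3 : (0:ℝ) ≤ (m s).toReal := ENNReal.toReal_nonneg
  nlinarith [mul_nonneg (by linarith : (0:ℝ) ≤ p - 1) h3]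

lemma phi_ub (q : ℝ) (hq : q ≤ -1) {x : ℝ} (hx : x ≤ q - 2⁻¹) :
    Phi m x ≤ -(m (Ioo (q - 2⁻¹) (q + 2⁻¹))).toReal := by
  set s := Ioo (q - 2⁻¹) (q + 2⁻¹) with hs
  have hfin : m s ≠ ⊤ :=
    ((measure_mono Ioo_subset_Icc_self).trans_lt measure_Icc_lt_top).ne
  have hx0 : x < 0 := by linarith
  rw [Phi, if_neg (not_le.2 hx0)]
  have hsub : s ⊆ Ico x 0 := by
    intro y hy
    rw [hs] at hy
    exact ⟨by linarith [hy.1], by linarith [hy.2]⟩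
  have hneg : IntegrableOn (fun y : ℝ => -y) (Ico x 0) m := (id_intOn m x 0).neg
  have h1 : (-(q + 2⁻¹)) * (m s).toReal ≤ ∫ y in s, (fun y : ℝ => -y) y ∂m :=
    setIntegral_ge_of_const_le_real measurableSet_Ioo hfin (fun y hy => by simp; linarith [hy.2])
      (hneg.mono_set hsub)
  have h2 : ∫ y in s, (fun y : ℝ => -y) y ∂m ≤ ∫ y in Ico x 0, (fun y : ℝ => -y) y ∂m := by
    apply setIntegral_mono_set hneg ?_ hsub.eventuallyLE
    filter_upwards [ae_restrict_mem measurableSet_Ico] with y hy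
    simpa using hy.2.le
  have e1 : ∫ y in s, -y ∂m = -∫ y in s, y ∂m := integral_neg (f := fun y : ℝ => y)
  have e2 : ∫ y in Ico x 0, -y ∂m = -∫ y in Ico x 0, y ∂m := integral_neg (f := fun y : ℝ => y)
  simp only [e1, e2] at h1 h2
  have h3 : (0:ℝ) ≤ (m s).toReal := ENNReal.toReal_nonneg
  nlinarith [mul_nonneg (by linarith : (0:ℝ) ≤ -q - 1) h3]

end Helpers

theorem psi_convex_and_linear_lower_bound
    (m : Measure ℝ) [IsLocallyFiniteMeasure m] (hm : m ≠ 0) (hsupp : SuppCond m) :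
    ConvexOn ℝ univ (Psi m) ∧ (∀ x : ℝ, 0 ≤ Psi m x) ∧ Psi m 0 = 0 ∧
      ∃ C₁ > (0:ℝ), ∀ x : ℝ, |x| ≤ C₁ * (Psi m x + 1) := by
  refine ⟨psi_convex m, psi_nonneg m, by simp [Psi], ?_⟩
  obtain ⟨⟨q, hq_supp, hq⟩, ⟨p, hp_supp, hp⟩⟩ := hsupp 1 one_pos
  rw [mem_Iic] at hq
  rw [mem_Ici] at hp
  set δp := (m (Ioo (p - 2⁻¹) (p + 2⁻¹))).toReal with hδp
  set δq := (m (Ioo (q - 2⁻¹) (q + 2⁻¹))).toReal with hδq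
  have hfp : m (Ioo (p - 2⁻¹) (p + 2⁻¹)) ≠ ⊤ :=
    ((measure_mono Ioo_subset_Icc_self).trans_lt measure_Icc_lt_top).ne
  have hfq : m (Ioo (q - 2⁻¹) (q + 2⁻¹)) ≠ ⊤ :=
    ((measure_mono Ioo_subset_Icc_self).trans_lt measure_Icc_lt_top).ne
  have hδp0 : 0 < δp := ENNReal.toReal_pos (hp_supp 2⁻¹ (by norm_num)).ne' hfp
  have hδq0 : 0 < δq := ENNReal.toReal_pos (hq_supp 2⁻¹ (by norm_num)).ne' hfq
  set ap : ℝ := p + 2⁻¹ with hap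
  set aq : ℝ := q - 2⁻¹ with haq
  have hbp : ∀ x, 0 ≤ x → x ≤ δp⁻¹ * Psi m x + ap := by
    intro x hx0
    rcases le_or_gt x ap with hx | hx
    · have hnn : 0 ≤ δp⁻¹ * Psi m x := mul_nonneg (inv_pos.2 hδp0).le (psi_nonneg m x)
      exact hx.trans (le_add_of_nonneg_left hnn)
    · have hlb := psi_lb_pos m δp ap (fun u hu => phi_lb m p hp hu) x hx.le
      have h6 := mul_le_mul_of_nonneg_left hlb (inv_pos.2 hδp0).le
      rw [inv_mul_cancel_left₀ hδp0.ne'] at h6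
      linarith
  have hbq : ∀ x, x ≤ 0 → -x ≤ δq⁻¹ * Psi m x + (-aq) := by
    intro x hx0
    rcases le_or_gt aq x with hx | hx
    · have hnn : 0 ≤ δq⁻¹ * Psi m x := mul_nonneg (inv_pos.2 hδq0).le (psi_nonneg m x)
      exact (neg_le_neg hx).trans (le_add_of_nonneg_left hnn)
    · have hlb := psi_lb_neg m δq aq (fun u hu => phi_ub m q hq hu) x hx.le
      have h6 := mul_le_mul_of_nonneg_left hlb (inv_pos.2 hδq0).le
      rw [inv_mul_cancel_left₀ hδq0.ne'] at h6
      linarith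
  set C₁ : ℝ := max (δp⁻¹ + ap) (δq⁻¹ + (-aq)) with hC
  have hap0 : (0:ℝ) < ap := by rw [hap]; linarith
  have haq0 : (0:ℝ) < -aq := by rw [haq]; linarith
  have hC0 : 0 < C₁ :=
    lt_of_lt_of_le (by positivity) (le_max_left (δp⁻¹ + ap) (δq⁻¹ + (-aq)))
  refine ⟨C₁, hC0, fun x => ?_⟩
  have hψ := psi_nonneg m x
  rcases le_or_gt 0 x with hx | hx
  · rw [abs_of_nonneg hx]
    have h := hbp x hx
    have hle : δp⁻¹ + ap ≤ C₁ := le_max_left _ _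
    have : δp⁻¹ * Psi m x + ap ≤ (δp⁻¹ + ap) * (Psi m x + 1) := by
      nlinarith [inv_pos.2 hδp0]
    nlinarith
  · rw [abs_of_neg hx]
    have h := hbq x hx.le
    have hle : δq⁻¹ + (-aq) ≤ C₁ := le_max_right _ _
    have : δq⁻¹ * Psi m x + (-aq) ≤ (δq⁻¹ + (-aq)) * (Psi m x + 1) := by
      nlinarith [inv_pos.2 hδq0]
    nlinarith
end
end

section
/- Let μ : ℝ → (0,∞) be a smooth strictly positive function and let u : ℝ×(0,∞) → ℝ be a smooth function satisfying 2 μ(x) ∂_t u(x,t) = ∂_xx u(x,t) for all (x,t) ∈ ℝ×(0,∞). Then for every ψ ∈ C²_c(ℝ) and all 0 < t₀ < t₂: ∫_{t₀}^{t₂} ∫_ℝ ψ(x) (∂_x u(x,t))² dx dt = (1/2) ∫_{t₀}^{t₂} ∫_ℝ ψ''(x) u(x,t)² dx dt + ∫_ℝ ψ(x) u(x,t₀)² μ(x) dx − ∫_ℝ ψ(x) u(x,t₂)² μ(x) dx. -/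
open MeasureTheory Set Function Filter
open scoped Topology

-- integral over ℝ of derivative of compactly supported C¹ function is 0
theorem aux_integral_deriv_zero (f : ℝ → ℝ) (hf : ContDiff ℝ 1 f)
    (h2f : HasCompactSupport f) : ∫ x, deriv f x = 0 := by
  have h1 := h2f.integral_Iic_deriv_eq hf 0
  have h2 := h2f.integral_Ioi_deriv_eq hf 0
  have hi : Integrable (deriv f) :=
    (hf.continuous_deriv le_rfl).integrable_of_hasCompactSupport h2f.deriv
  rw [← intervalIntegral.integral_Iic_add_Ioi hi.integrableOn hi.integrableOn, h1, h2]
  ring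


/-- Energy identity (first part of Lemma 8.6): for a smooth solution `u` of
`2 μ u_t = u_xx` with smooth strictly positive `μ`, and any `ψ ∈ C²_c(ℝ)`,
`∫_{t₀}^{t₂} ∫ ψ u_x² dx dt = ½∫_{t₀}^{t₂}∫ ψ'' u² dx dt + ∫ ψ u(·,t₀)² μ dx − ∫ ψ u(·,t₂)² μ dx`. -/
theorem energy_identity
    (μ : ℝ → ℝ) (hμs : ContDiff ℝ (⊤ : ℕ∞) μ) (hμpos : ∀ x : ℝ, 0 < μ x)
    (u : ℝ → ℝ → ℝ)
    (hu : ContDiffOn ℝ (⊤ : ℕ∞) (uncurry u) (univ ×ˢ Ioi 0))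
    (hpde : ∀ x : ℝ, ∀ t > (0:ℝ),
      2 * μ x * deriv (u x) t = iteratedDeriv 2 (fun y => u y t) x)
    (ψ : ℝ → ℝ) (hψ : ContDiff ℝ 2 ψ) (hψc : HasCompactSupport ψ)
    (t₀ t₂ : ℝ) (ht₀ : 0 < t₀) (ht₀₂ : t₀ < t₂) :
    ∫ t in t₀..t₂, ∫ x, ψ x * (deriv (fun y => u y t) x) ^ 2
      = (1 / 2) * (∫ t in t₀..t₂, ∫ x, iteratedDeriv 2 ψ x * (u x t) ^ 2)
        + (∫ x, ψ x * (u x t₀) ^ 2 * μ x)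
        - ∫ x, ψ x * (u x t₂) ^ 2 * μ x := by

  have hSopen : IsOpen ((univ : Set ℝ) ×ˢ Ioi (0:ℝ)) := isOpen_univ.prod isOpen_Ioi
  have hmem : ∀ x t : ℝ, 0 < t → (x, t) ∈ (univ : Set ℝ) ×ˢ Ioi (0:ℝ) :=
    fun x t ht => ⟨mem_univ _, ht⟩
  set U1 : ℝ × ℝ → ℝ := fun p => fderiv ℝ (uncurry u) p (1, 0) with hU1def
  set T1 : ℝ × ℝ → ℝ := fun p => fderiv ℝ (uncurry u) p (0, 1) with hT1def
  have hfd : ContDiffOn ℝ (⊤ : ℕ∞) (fderiv ℝ (uncurry u)) ((univ : Set ℝ) ×ˢ Ioi (0:ℝ)) :=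
    hu.fderiv_of_isOpen hSopen (by simp)
  have hU1cd : ContDiffOn ℝ (⊤ : ℕ∞) U1 ((univ : Set ℝ) ×ˢ Ioi (0:ℝ)) :=
    (ContinuousLinearMap.apply ℝ ℝ ((1:ℝ), (0:ℝ))).contDiff.comp_contDiffOn hfd
  have hT1cd : ContDiffOn ℝ (⊤ : ℕ∞) T1 ((univ : Set ℝ) ×ˢ Ioi (0:ℝ)) :=
    (ContinuousLinearMap.apply ℝ ℝ ((0:ℝ), (1:ℝ))).contDiff.comp_contDiffOn hfd
  set U2 : ℝ × ℝ → ℝ := fun p => fderiv ℝ U1 p (1, 0) with hU2def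
  have hU2cd : ContDiffOn ℝ (⊤ : ℕ∞) U2 ((univ : Set ℝ) ×ˢ Ioi (0:ℝ)) :=
    (ContinuousLinearMap.apply ℝ ℝ ((1:ℝ), (0:ℝ))).contDiff.comp_contDiffOn
      (hU1cd.fderiv_of_isOpen hSopen (by simp))
  -- pointwise derivative facts
  have hx : ∀ x t : ℝ, 0 < t → HasDerivAt (fun y => u y t) (U1 (x, t)) x := by
    intro x t ht
    have hd : DifferentiableAt ℝ (uncurry u) (x, t) :=
      (hu.contDiffAt (hSopen.mem_nhds (hmem x t ht))).differentiableAt (by simp)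
    have h1 : HasDerivAt (fun y : ℝ => (y, t)) ((1:ℝ), (0:ℝ)) x :=
      (hasDerivAt_id x).prodMk (hasDerivAt_const x t)
    exact hd.hasFDerivAt.comp_hasDerivAt x h1
  have hT : ∀ x t : ℝ, 0 < t → HasDerivAt (u x) (T1 (x, t)) t := by
    intro x t ht
    have hd : DifferentiableAt ℝ (uncurry u) (x, t) :=
      (hu.contDiffAt (hSopen.mem_nhds (hmem x t ht))).differentiableAt (by simp)
    have h1 : HasDerivAt (fun s : ℝ => (x, s)) ((0:ℝ), (1:ℝ)) t :=
      (hasDerivAt_const t x).prodMk (hasDerivAt_id t)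
    exact hd.hasFDerivAt.comp_hasDerivAt t h1
  have hxx : ∀ x t : ℝ, 0 < t → HasDerivAt (fun y => U1 (y, t)) (U2 (x, t)) x := by
    intro x t ht
    have hd : DifferentiableAt ℝ U1 (x, t) :=
      (hU1cd.contDiffAt (hSopen.mem_nhds (hmem x t ht))).differentiableAt (by simp)
    have h1 : HasDerivAt (fun y : ℝ => (y, t)) ((1:ℝ), (0:ℝ)) x :=
      (hasDerivAt_id x).prodMk (hasDerivAt_const x t)
    exact hd.hasFDerivAt.comp_hasDerivAt x h1
  have hderiv1 : ∀ t : ℝ, 0 < t → deriv (fun y => u y t) = fun y => U1 (y, t) := by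
    intro t ht; funext y; exact (hx y t ht).deriv
  have hit2 : ∀ x t : ℝ, 0 < t → iteratedDeriv 2 (fun y => u y t) x = U2 (x, t) := by
    intro x t ht
    rw [show (2:ℕ) = 1 + 1 from rfl, iteratedDeriv_succ, iteratedDeriv_one, hderiv1 t ht]
    exact (hxx x t ht).deriv
  have hpde2 : ∀ x t : ℝ, 0 < t → 2 * μ x * T1 (x, t) = U2 (x, t) := by
    intro x t ht
    rw [← hit2 x t ht, ← (hT x t ht).deriv]
    exact hpde x t ht

  -- smoothness in x at fixed time
  have hcomp : ∀ f : ℝ × ℝ → ℝ, ContDiffOn ℝ (⊤ : ℕ∞) f ((univ : Set ℝ) ×ˢ Ioi (0:ℝ)) →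
      ∀ t : ℝ, 0 < t → ContDiff ℝ (⊤ : ℕ∞) (fun y => f (y, t)) := by
    intro f hf t ht
    rw [← contDiffOn_univ]
    exact hf.comp ((contDiff_id.prodMk contDiff_const).contDiffOn) (fun y _ => hmem y t ht)
  have hψ1 : ContDiff ℝ 1 (deriv ψ) := by
    have h2 : ContDiff ℝ (1+1) ψ := by exact_mod_cast hψ
    exact (contDiff_succ_iff_deriv.mp h2).2.2
  have hψ2eq : iteratedDeriv 2 ψ = deriv (deriv ψ) := by
    rw [show (2:ℕ) = 1 + 1 from rfl, iteratedDeriv_succ, iteratedDeriv_one]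
  -- integration by parts in space
  have key : ∀ t : ℝ, 0 < t →
      ∫ x, ψ x * (u x t * U2 (x, t))
        = (1/2) * (∫ x, iteratedDeriv 2 ψ x * (u x t)^2) - ∫ x, ψ x * (U1 (x, t))^2 := by
    intro t ht
    have hw : ContDiff ℝ (⊤ : ℕ∞) (fun y => u y t) := hcomp _ hu t ht
    have hw1 : ContDiff ℝ (⊤ : ℕ∞) (fun y => U1 (y, t)) := hcomp _ hU1cd t ht
    have hw2 : ContDiff ℝ (⊤ : ℕ∞) (fun y => U2 (y, t)) := hcomp _ hU2cd t ht
    have Ia : Integrable (fun x => deriv ψ x * (u x t * U1 (x, t))) :=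
      (hψ1.continuous.mul (hw.continuous.mul hw1.continuous)).integrable_of_hasCompactSupport
        hψc.deriv.mul_right
    have Ib : Integrable (fun x => ψ x * (U1 (x, t))^2) :=
      (hψ.continuous.mul (hw1.continuous.pow 2)).integrable_of_hasCompactSupport hψc.mul_right
    have Ic : Integrable (fun x => ψ x * (u x t * U2 (x, t))) :=
      (hψ.continuous.mul (hw.continuous.mul hw2.continuous)).integrable_of_hasCompactSupport
        hψc.mul_right
    have Id : Integrable (fun x => deriv (deriv ψ) x * (u x t)^2) :=
      ((hψ1.continuous_deriv le_rfl).mul (hw.continuous.pow 2)).integrable_of_hasCompactSupport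
        hψc.deriv.deriv.mul_right
    -- first IBP identity
    have h0 : (∫ x, deriv ψ x * (u x t * U1 (x, t))) + ((∫ x, ψ x * (U1 (x, t))^2)
        + ∫ x, ψ x * (u x t * U2 (x, t))) = 0 := by
      have hg1 : ContDiff ℝ 1 (fun x => ψ x * (u x t * U1 (x, t))) :=
        (hψ.of_le one_le_two).mul ((hw.of_le (by simp)).mul (hw1.of_le (by simp)))
      have hg1d : ∀ x : ℝ, HasDerivAt (fun x => ψ x * (u x t * U1 (x, t)))
          (deriv ψ x * (u x t * U1 (x, t)) + (ψ x * (U1 (x, t))^2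
            + ψ x * (u x t * U2 (x, t)))) x := by
        intro x
        have hp : HasDerivAt ψ (deriv ψ x) x := (hψ.differentiable (by simp) x).hasDerivAt
        have := hp.mul ((hx x t ht).mul (hxx x t ht))
        refine this.congr_deriv ?_
        simp only [Pi.mul_apply, Pi.pow_apply]
        ring
      have e1 : ∫ x, (deriv ψ x * (u x t * U1 (x, t)) + (ψ x * (U1 (x, t))^2
          + ψ x * (u x t * U2 (x, t)))) = 0 := by
        have hdg : (fun x => deriv ψ x * (u x t * U1 (x, t)) + (ψ x * (U1 (x, t))^2
            + ψ x * (u x t * U2 (x, t))))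
            = deriv (fun x => ψ x * (u x t * U1 (x, t))) :=
          funext fun x => ((hg1d x).deriv).symm
        rw [hdg]
        exact aux_integral_deriv_zero _ hg1 hψc.mul_right
      have Ibc : Integrable (fun x => ψ x * (U1 (x, t))^2 + ψ x * (u x t * U2 (x, t))) :=
        Ib.add Ic
      rw [integral_add Ia Ibc, integral_add Ib Ic] at e1
      exact e1
    -- second IBP identity
    have h1 : (∫ x, deriv (deriv ψ) x * (u x t)^2)
        + 2 * ∫ x, deriv ψ x * (u x t * U1 (x, t)) = 0 := by
      have hg2 : ContDiff ℝ 1 (fun x => deriv ψ x * (u x t)^2) :=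
        hψ1.mul ((hw.of_le (by simp)).pow 2)
      have hg2d : ∀ x : ℝ, HasDerivAt (fun x => deriv ψ x * (u x t)^2)
          (deriv (deriv ψ) x * (u x t)^2 + 2 * (deriv ψ x * (u x t * U1 (x, t)))) x := by
        intro x
        have hp : HasDerivAt (deriv ψ) (deriv (deriv ψ) x) x :=
          (hψ1.differentiable (by simp) x).hasDerivAt
        have := hp.mul ((hx x t ht).pow 2)
        refine this.congr_deriv ?_
        simp only [Pi.mul_apply, Pi.pow_apply]
        ring
      have e2 : ∫ x, (deriv (deriv ψ) x * (u x t)^2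
          + 2 * (deriv ψ x * (u x t * U1 (x, t)))) = 0 := by
        have hdg : (fun x => deriv (deriv ψ) x * (u x t)^2
            + 2 * (deriv ψ x * (u x t * U1 (x, t))))
            = deriv (fun x => deriv ψ x * (u x t)^2) :=
          funext fun x => ((hg2d x).deriv).symm
        rw [hdg]
        exact aux_integral_deriv_zero _ hg2 hψc.deriv.mul_right
      have Ia2 : Integrable (fun x => 2 * (deriv ψ x * (u x t * U1 (x, t)))) :=
        Ia.const_mul 2
      rw [integral_add Id Ia2, MeasureTheory.integral_const_mul] at e2
      exact e2
    rw [hψ2eq]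
    linarith

  -- continuity helpers
  have hcontPt : ∀ h : ℝ × ℝ → ℝ, ContinuousOn h ((univ : Set ℝ) ×ˢ Ioi (0:ℝ)) →
      ∀ s : ℝ, 0 < s → Continuous (fun x => h (x, s)) := by
    intro h hh s hs
    rw [continuous_iff_continuousAt]
    intro x
    have h1 : ContinuousAt (fun y : ℝ => (y, s)) x :=
      (continuous_id.prodMk continuous_const).continuousAt
    exact ContinuousAt.comp (f := fun y : ℝ => (y, s))
      (hh.continuousAt (hSopen.mem_nhds (hmem x s hs))) h1
  have hbdd : ∀ g : ℝ → ℝ, HasCompactSupport g → ∀ h : ℝ × ℝ → ℝ,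
      ContinuousOn h ((univ : Set ℝ) ×ˢ Ioi (0:ℝ)) → ∀ t₁ : ℝ, 0 < t₁ →
      ∃ M : ℝ, ∀ x ∈ tsupport g, ∀ s ∈ Icc (t₁/2) (2*t₁), |h (x, s)| ≤ M := by
    intro g hgc h hh t₁ ht₁
    have hK : IsCompact (tsupport g ×ˢ Icc (t₁/2) (2*t₁)) := hgc.prod isCompact_Icc
    have hKS : (tsupport g ×ˢ Icc (t₁/2) (2*t₁)) ⊆ (univ : Set ℝ) ×ˢ Ioi (0:ℝ) := by
      rintro ⟨x, s⟩ ⟨-, hs⟩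
      exact ⟨mem_univ _, lt_of_lt_of_le (by linarith) hs.1⟩
    obtain ⟨M, hM⟩ := hK.exists_bound_of_continuousOn (hh.mono hKS)
    exact ⟨M, fun x hx s hs => by
      simpa [Real.norm_eq_abs] using hM (x, s) ⟨hx, hs⟩⟩
  have hmeas : ∀ g : ℝ → ℝ, Continuous g → ∀ h : ℝ × ℝ → ℝ,
      ContinuousOn h ((univ : Set ℝ) ×ˢ Ioi (0:ℝ)) → ∀ s : ℝ, 0 < s →
      AEStronglyMeasurable (fun x => g x * h (x, s)) volume := by
    intro g hg h hh s hs
    exact (hg.mul (hcontPt h hh s hs)).aestronglyMeasurable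
  have hboundint : ∀ g : ℝ → ℝ, HasCompactSupport g → ∀ M : ℝ,
      Integrable ((tsupport g).indicator (fun _ => M)) volume := by
    intro g hgc M
    rw [integrable_indicator_iff (isClosed_tsupport g).measurableSet]
    exact integrableOn_const hgc.measure_lt_top.ne
  -- continuity of parametric integrals
  have hcontInt : ∀ g : ℝ → ℝ, Continuous g → HasCompactSupport g →
      ∀ h : ℝ × ℝ → ℝ, ContinuousOn h ((univ : Set ℝ) ×ˢ Ioi (0:ℝ)) →
      ∀ t₁ : ℝ, 0 < t₁ → ContinuousAt (fun s => ∫ x, g x * h (x, s)) t₁ := by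
    intro g hg hgc h hh t₁ ht₁
    have hgh : ContinuousOn (fun p : ℝ × ℝ => g p.1 * h p) ((univ : Set ℝ) ×ˢ Ioi (0:ℝ)) :=
      ((hg.comp continuous_fst).continuousOn).mul hh
    obtain ⟨M, hM⟩ := hbdd g hgc _ hgh t₁ ht₁
    apply continuousAt_of_dominated (bound := (tsupport g).indicator (fun _ => M))
    · filter_upwards [Ioi_mem_nhds ht₁] with s hs
      exact hmeas g hg h hh s hs
    · have hIoo : Ioo (t₁/2) (2*t₁) ∈ 𝓝 t₁ := Ioo_mem_nhds (by linarith) (by linarith)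
      filter_upwards [hIoo] with s hs
      refine Filter.Eventually.of_forall (fun x => ?_)
      by_cases hx : x ∈ tsupport g
      · rw [indicator_of_mem hx]
        have hMx := hM x hx s ⟨hs.1.le, hs.2.le⟩
        rw [abs_mul] at hMx
        simpa [Real.norm_eq_abs, abs_mul] using hMx
      · rw [indicator_of_notMem hx, image_eq_zero_of_notMem_tsupport hx]
        simp
    · exact hboundint g hgc M
    · refine Filter.Eventually.of_forall (fun x => ?_)
      have hc : ContinuousAt (fun s => h (x, s)) t₁ := by
        have h1 : ContinuousAt (fun s : ℝ => (x, s)) t₁ :=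
          (continuous_const.prodMk continuous_id).continuousAt
        exact ContinuousAt.comp (f := fun s : ℝ => (x, s))
          (hh.continuousAt (hSopen.mem_nhds (hmem x t₁ ht₁))) h1
      exact continuousAt_const.mul hc

  -- derivative of the energy in time
  have hG : ∀ t₁ : ℝ, 0 < t₁ →
      HasDerivAt (fun s => ∫ x, ψ x * (u x s)^2 * μ x)
        ((1/2) * (∫ x, iteratedDeriv 2 ψ x * (u x t₁)^2) - ∫ x, ψ x * (U1 (x, t₁))^2) t₁ := by
    intro t₁ ht₁
    have hgh : ContinuousOn (fun p : ℝ × ℝ => ψ p.1 * (2 * (uncurry u p * T1 p)) * μ p.1)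
        ((univ : Set ℝ) ×ˢ Ioi (0:ℝ)) :=
      (((hψ.continuous.comp continuous_fst).continuousOn.mul
        (continuousOn_const.mul (hu.continuousOn.mul hT1cd.continuousOn))).mul
        ((hμs.continuous.comp continuous_fst).continuousOn))
    obtain ⟨M, hM⟩ := hbdd ψ hψc _ hgh t₁ ht₁
    have hε : (0:ℝ) < t₁/2 := by linarith
    have hFmeas : ∀ᶠ s in 𝓝 t₁,
        AEStronglyMeasurable (fun x => ψ x * (u x s)^2 * μ x) volume := by
      filter_upwards [Ioi_mem_nhds ht₁] with s hs
      exact ((hψ.continuous.mul ((hcontPt _ hu.continuousOn s hs).pow 2)).mul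
        hμs.continuous).aestronglyMeasurable
    have hFint : Integrable (fun x => ψ x * (u x t₁)^2 * μ x) volume :=
      ((hψ.continuous.mul ((hcontPt _ hu.continuousOn t₁ ht₁).pow 2)).mul
        hμs.continuous).integrable_of_hasCompactSupport (hψc.mul_right.mul_right)
    have hF'meas : AEStronglyMeasurable
        (fun x => ψ x * (2 * (u x t₁ * T1 (x, t₁))) * μ x) volume :=
      ((hψ.continuous.mul (continuous_const.mul ((hcontPt _ hu.continuousOn t₁ ht₁).mul
        (hcontPt _ hT1cd.continuousOn t₁ ht₁)))).mul hμs.continuous).aestronglyMeasurable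
    have hbound : ∀ᵐ x ∂volume, ∀ s ∈ Metric.ball t₁ (t₁/2),
        ‖ψ x * (2 * (u x s * T1 (x, s))) * μ x‖
          ≤ (tsupport ψ).indicator (fun _ => M) x := by
      refine Eventually.of_forall (fun x s hs => ?_)
      rw [Metric.mem_ball, Real.dist_eq, abs_sub_lt_iff] at hs
      by_cases hx : x ∈ tsupport ψ
      · rw [indicator_of_mem hx]
        have hMx := hM x hx s ⟨by linarith [hs.1, hs.2], by linarith [hs.1, hs.2]⟩
        rw [Real.norm_eq_abs]
        exact hMx
      · rw [indicator_of_notMem hx, image_eq_zero_of_notMem_tsupport hx]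
        simp
    have hdiff : ∀ᵐ x ∂volume, ∀ s ∈ Metric.ball t₁ (t₁/2),
        HasDerivAt (fun s => ψ x * (u x s)^2 * μ x)
          (ψ x * (2 * (u x s * T1 (x, s))) * μ x) s := by
      refine Eventually.of_forall (fun x s hs => ?_)
      rw [Metric.mem_ball, Real.dist_eq, abs_sub_lt_iff] at hs
      have hs0 : 0 < s := by linarith [hs.1, hs.2]
      have h2 := (((hT x s hs0).pow 2).const_mul (ψ x)).mul_const (μ x)
      refine h2.congr_deriv ?_
      push_cast
      ring
    have main := (hasDerivAt_integral_of_dominated_loc_of_deriv_le (Metric.ball_mem_nhds t₁ hε) hFmeas hFint hF'meas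
      hbound (hboundint ψ hψc M) hdiff).2
    have heq : (∫ x, ψ x * (2 * (u x t₁ * T1 (x, t₁))) * μ x)
        = ∫ x, ψ x * (u x t₁ * U2 (x, t₁)) := by
      refine integral_congr_ae (Eventually.of_forall (fun x => ?_))
      show ψ x * (2 * (u x t₁ * T1 (x, t₁))) * μ x = ψ x * (u x t₁ * U2 (x, t₁))
      rw [← hpde2 x t₁ ht₁]
      ring
    rw [heq, key t₁ ht₁] at main
    exact main
  -- FTC assembly
  have hmemIcc : ∀ s ∈ uIcc t₀ t₂, 0 < s := by
    intro s hs
    rw [uIcc_of_le ht₀₂.le] at hs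
    linarith [hs.1]
  have hψ2cont : Continuous (iteratedDeriv 2 ψ) := by
    rw [hψ2eq]; exact hψ1.continuous_deriv le_rfl
  have hψ2supp : HasCompactSupport (iteratedDeriv 2 ψ) := by
    rw [hψ2eq]; exact hψc.deriv.deriv
  have hAint : IntervalIntegrable (fun s => ∫ x, iteratedDeriv 2 ψ x * (u x s)^2)
      volume t₀ t₂ := by
    apply ContinuousOn.intervalIntegrable
    intro s hs
    exact (hcontInt (iteratedDeriv 2 ψ) hψ2cont hψ2supp
      (fun p => (uncurry u p)^2) (hu.continuousOn.pow 2) s (hmemIcc s hs)).continuousWithinAt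
  have hBint : IntervalIntegrable (fun s => ∫ x, ψ x * (U1 (x, s))^2) volume t₀ t₂ := by
    apply ContinuousOn.intervalIntegrable
    intro s hs
    exact (hcontInt ψ hψ.continuous hψc
      (fun p => (U1 p)^2) (hU1cd.continuousOn.pow 2) s (hmemIcc s hs)).continuousWithinAt
  have hHint : IntervalIntegrable
      (fun s => (1/2) * (∫ x, iteratedDeriv 2 ψ x * (u x s)^2) - ∫ x, ψ x * (U1 (x, s))^2)
      volume t₀ t₂ := (hAint.const_mul _).sub hBint
  have hftc := intervalIntegral.integral_eq_sub_of_hasDerivAt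
    (f := fun s => ∫ x, ψ x * (u x s)^2 * μ x)
    (fun s hs => hG s (hmemIcc s hs)) hHint
  rw [intervalIntegral.integral_sub (hAint.const_mul _) hBint,
    intervalIntegral.integral_const_mul] at hftc
  have hL : (∫ t in t₀..t₂, ∫ x, ψ x * (deriv (fun y => u y t) x)^2)
      = ∫ t in t₀..t₂, ∫ x, ψ x * (U1 (x, t))^2 := by
    apply intervalIntegral.integral_congr
    intro s hs
    simp only [hderiv1 s (hmemIcc s hs)]
  rw [hL]
  linarith [hftc]
end

section
/- Let μ : ℝ → (0,∞) be a smooth strictly positive function and let u : ℝ×(0,∞) → ℝ be a smooth function satisfying 2 μ(x) ∂_t u(x,t) = ∂_xx u(x,t) for all (x,t) ∈ ℝ×(0,∞). Then for every ψ ∈ C²_c(ℝ) with ψ ≥ 0 and all 0 < t₁ < t₂: (t₁/2) ∫_{t₁}^{t₂} ∫_ℝ ψ(x) (∂_x u(x,t))² dx dt ≤ (t₁/4) ∫_{t₁/2}^{t₂} ∫_ℝ |ψ''(x)| u(x,t)² dx dt + ∫_{t₁/2}^{t₁} ∫_ℝ ψ(x) u(x,t)² μ(x) dx dt. -/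
open MeasureTheory Set Function

lemma integral_eq_intervalIntegral_of_support' {R : ℝ} (hR : 0 < R) {F : ℝ → ℝ}
    (hF : ∀ x, x ∉ Ioo (-R) R → F x = 0) :
    ∫ x, F x = ∫ x in (-R)..R, F x := by
  have h1 : F = (Ioc (-R) R).indicator F := by
    funext x
    by_cases hx : x ∈ Ioc (-R) R
    · simp [indicator_of_mem hx]
    · rw [indicator_of_notMem hx]
      exact hF x fun hx' => hx (Ioo_subset_Ioc_self hx')
  rw [intervalIntegral.integral_of_le (by linarith), ← integral_indicator measurableSet_Ioc]
  conv_lhs => rw [h1]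

/-- Energy estimate (8.7) in Lemma 8.6: for a smooth solution `u` of `2 μ u_t = u_xx`
with smooth strictly positive `μ`, and any nonnegative `ψ ∈ C²_c(ℝ)` and `0 < t₁ < t₂`,
`(t₁/2)∫_{t₁}^{t₂}∫ ψ u_x² dx dt ≤ (t₁/4)∫_{t₁/2}^{t₂}∫ |ψ''| u² dx dt + ∫_{t₁/2}^{t₁}∫ ψ u² μ dx dt`. -/
theorem energy_estimate_space_derivative
    (μ : ℝ → ℝ) (hμs : ContDiff ℝ (⊤ : ℕ∞) μ) (hμpos : ∀ x : ℝ, 0 < μ x)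
    (u : ℝ → ℝ → ℝ)
    (hu : ContDiffOn ℝ (⊤ : ℕ∞) (uncurry u) (univ ×ˢ Ioi 0))
    (hpde : ∀ x : ℝ, ∀ t > (0:ℝ),
      2 * μ x * deriv (u x) t = iteratedDeriv 2 (fun y => u y t) x)
    (ψ : ℝ → ℝ) (hψ : ContDiff ℝ 2 ψ) (hψc : HasCompactSupport ψ)
    (hψpos : ∀ x : ℝ, 0 ≤ ψ x)
    (t₁ t₂ : ℝ) (ht₁ : 0 < t₁) (ht₁₂ : t₁ < t₂) :
    (t₁ / 2) * ∫ t in t₁..t₂, ∫ x, ψ x * (deriv (fun y => u y t) x) ^ 2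
      ≤ (t₁ / 4) * (∫ t in (t₁ / 2)..t₂, ∫ x, |iteratedDeriv 2 ψ x| * (u x t) ^ 2)
        + ∫ t in (t₁ / 2)..t₁, ∫ x, ψ x * (u x t) ^ 2 * μ x := by
  have hU : IsOpen ((univ : Set ℝ) ×ˢ Ioi (0:ℝ)) := isOpen_univ.prod isOpen_Ioi
  have hmem : ∀ (x t : ℝ), 0 < t → (x, t) ∈ (univ : Set ℝ) ×ˢ Ioi (0:ℝ) :=
    fun x t ht => ⟨mem_univ x, ht⟩
  set f : ℝ × ℝ → ℝ := uncurry u with hfdef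
  set g : ℝ × ℝ → ℝ := fun p => fderiv ℝ f p (1, 0) with hgdef
  set h : ℝ × ℝ → ℝ := fun p => fderiv ℝ f p (0, 1) with hhdef
  set g2 : ℝ × ℝ → ℝ := fun p => fderiv ℝ g p (1, 0) with hg2def
  have hfd : ContDiffOn ℝ (⊤ : ℕ∞) (fderiv ℝ f) ((univ : Set ℝ) ×ˢ Ioi (0:ℝ)) :=
    hu.fderiv_of_isOpen hU (by simp)
  have hgs : ContDiffOn ℝ (⊤ : ℕ∞) g ((univ : Set ℝ) ×ˢ Ioi (0:ℝ)) := hfd.clm_apply contDiffOn_const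
  have hhs : ContDiffOn ℝ (⊤ : ℕ∞) h ((univ : Set ℝ) ×ˢ Ioi (0:ℝ)) := hfd.clm_apply contDiffOn_const
  have hg2s : ContDiffOn ℝ (⊤ : ℕ∞) g2 ((univ : Set ℝ) ×ˢ Ioi (0:ℝ)) :=
    (hgs.fderiv_of_isOpen hU (by simp)).clm_apply contDiffOn_const
  -- pointwise derivative facts
  have hux : ∀ (x t : ℝ), 0 < t → HasDerivAt (fun y => u y t) (g (x, t)) x := by
    intro x t ht
    have hdf : HasFDerivAt f (fderiv ℝ f (x, t)) (x, t) :=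
      (((hu.contDiffAt (hU.mem_nhds (hmem x t ht))).differentiableAt (by simp))).hasFDerivAt
    have hline : HasDerivAt (fun y : ℝ => ((y : ℝ), t)) ((1:ℝ), (0:ℝ)) x :=
      (hasDerivAt_id x).prodMk (hasDerivAt_const x t)
    exact hdf.comp_hasDerivAt x hline
  have hut : ∀ (x t : ℝ), 0 < t → HasDerivAt (u x) (h (x, t)) t := by
    intro x t ht
    have hdf : HasFDerivAt f (fderiv ℝ f (x, t)) (x, t) :=
      (((hu.contDiffAt (hU.mem_nhds (hmem x t ht))).differentiableAt (by simp))).hasFDerivAt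
    have hline : HasDerivAt (fun s : ℝ => ((x : ℝ), s)) ((0:ℝ), (1:ℝ)) t :=
      (hasDerivAt_const t x).prodMk (hasDerivAt_id t)
    exact hdf.comp_hasDerivAt t hline
  have hgx : ∀ (x t : ℝ), 0 < t → HasDerivAt (fun y => g (y, t)) (g2 (x, t)) x := by
    intro x t ht
    have hdg : HasFDerivAt g (fderiv ℝ g (x, t)) (x, t) :=
      (((hgs.contDiffAt (hU.mem_nhds (hmem x t ht))).differentiableAt (by simp))).hasFDerivAt
    have hline : HasDerivAt (fun y : ℝ => ((y : ℝ), t)) ((1:ℝ), (0:ℝ)) x :=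
      (hasDerivAt_id x).prodMk (hasDerivAt_const x t)
    exact hdg.comp_hasDerivAt x hline
  have hderiv_eq : ∀ (t : ℝ), 0 < t → (deriv fun y => u y t) = fun y => g (y, t) := by
    intro t ht; funext y; exact (hux y t ht).deriv
  have hiter2 : ∀ (x t : ℝ), 0 < t → iteratedDeriv 2 (fun y => u y t) x = g2 (x, t) := by
    intro x t ht
    rw [show (2:ℕ) = 1+1 from rfl, iteratedDeriv_succ, iteratedDeriv_one, hderiv_eq t ht]
    exact (hgx x t ht).deriv
  have hpde' : ∀ (x t : ℝ), 0 < t → 2 * μ x * h (x, t) = g2 (x, t) := by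
    intro x t ht
    have hp := hpde x t ht
    rwa [(hut x t ht).deriv, hiter2 x t ht] at hp
  -- ψ facts
  have hψd : Differentiable ℝ ψ := hψ.differentiable (by norm_num)
  have hψ1 : ContDiff ℝ 1 (deriv ψ) := by
    have h2 : ((2:WithTop ℕ∞)) = 1 + 1 := by norm_num
    rw [h2] at hψ
    exact (contDiff_succ_iff_deriv.mp hψ).2.2
  have e2 : iteratedDeriv 2 ψ = deriv (deriv ψ) := by
    rw [show (2:ℕ) = 1+1 from rfl, iteratedDeriv_succ, iteratedDeriv_one]
  have hψ'd : Differentiable ℝ (deriv ψ) := hψ1.differentiable one_ne_zero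
  have hψ'' : ∀ x, HasDerivAt (deriv ψ) (iteratedDeriv 2 ψ x) x := by
    intro x; rw [e2]; exact (hψ'd x).hasDerivAt
  have hψ''cont : Continuous (iteratedDeriv 2 ψ) := by
    rw [e2]; exact hψ1.continuous_deriv le_rfl
  -- R
  obtain ⟨R, hR0, hRsub⟩ := hψc.isCompact.isBounded.subset_ball_lt 0 0
  have hRsub' : tsupport ψ ⊆ Ioo (-R) R := by
    rwa [Real.ball_eq_Ioo, zero_sub, zero_add] at hRsub
  have hRR : -R ≤ R := by linarith
  have hψzero : ∀ x, x ∉ Ioo (-R) R → ψ x = 0 := fun x hx =>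
    image_eq_zero_of_notMem_tsupport fun hm => hx (hRsub' hm)
  have hdψzero : ∀ x, x ∉ Ioo (-R) R → deriv ψ x = 0 := by
    intro x hx
    by_contra hne
    exact hx (hRsub' (support_deriv_subset (by simpa [Function.mem_support] using hne)))
  have hd2ψzero : ∀ x, x ∉ Ioo (-R) R → iteratedDeriv 2 ψ x = 0 := by
    intro x hx
    rw [e2]
    by_contra hne
    have h1 : x ∈ support (deriv (deriv ψ)) := by simpa [Function.mem_support] using hne
    have h2 : x ∈ tsupport (deriv ψ) := support_deriv_subset h1
    have h3 : x ∈ tsupport ψ := closure_minimal support_deriv_subset isClosed_closure h2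
    exact hx (hRsub' h3)
  -- section integrals
  set Fn : ℝ → ℝ := fun t => ∫ x in (-R)..R, ψ x * g (x, t) ^ 2 with hFndef
  set Hn : ℝ → ℝ := fun t => ∫ x in (-R)..R, iteratedDeriv 2 ψ x * u x t ^ 2 with hHndef
  set Gn : ℝ → ℝ := fun t => ∫ x in (-R)..R, |iteratedDeriv 2 ψ x| * u x t ^ 2 with hGndef
  set En : ℝ → ℝ := fun t => ∫ x in (-R)..R, ψ x * u x t ^ 2 * μ x with hEndef
  -- continuity in x for fixed t > 0
  have hu_cx : ∀ t : ℝ, 0 < t → Continuous fun y => u y t := fun t ht =>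
    hu.continuousOn.comp_continuous (continuous_id.prodMk continuous_const)
      fun y => hmem y t ht
  have hg_cx : ∀ t : ℝ, 0 < t → Continuous fun y => g (y, t) := fun t ht =>
    hgs.continuousOn.comp_continuous (continuous_id.prodMk continuous_const)
      fun y => hmem y t ht
  have hg2_cx : ∀ t : ℝ, 0 < t → Continuous fun y => g2 (y, t) := fun t ht =>
    hg2s.continuousOn.comp_continuous (continuous_id.prodMk continuous_const)
      fun y => hmem y t ht
  have hh_cx : ∀ t : ℝ, 0 < t → Continuous fun y => h (y, t) := fun t ht =>
    hhs.continuousOn.comp_continuous (continuous_id.prodMk continuous_const)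
      fun y => hmem y t ht
  have hc : (0:ℝ) < t₁ / 2 := by linarith
  -- time-continuity of the section integrals on [t₁/2, ∞)
  have clampCont : ∀ W : ℝ × ℝ → ℝ, ContinuousOn W ((univ : Set ℝ) ×ˢ Ioi (0:ℝ)) →
      ContinuousOn (fun t => ∫ x in (-R)..R, W (x, t)) (Ici (t₁ / 2)) := by
    intro W hW
    have hclamp : Continuous fun t => ∫ x in (-R)..R, W (x, max t (t₁ / 2)) := by
      apply intervalIntegral.continuous_parametric_intervalIntegral_of_continuous'
        (μ := volume) (f := fun t x => W (x, max t (t₁ / 2)))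
      exact hW.comp_continuous
        (continuous_snd.prodMk ((continuous_fst.max continuous_const)))
        fun p => ⟨mem_univ _, lt_of_lt_of_le hc (le_max_right _ _)⟩
    exact hclamp.continuousOn.congr fun t ht => by
      simp only [max_eq_left (mem_Ici.mp ht)]
  have hFcont : ContinuousOn Fn (Ici (t₁ / 2)) :=
    clampCont _ (((hψ.continuous.comp continuous_fst).continuousOn).mul (hgs.continuousOn.pow 2))
  have hHcont : ContinuousOn Hn (Ici (t₁ / 2)) :=
    clampCont _ (((hψ''cont.comp continuous_fst).continuousOn).mul (hu.continuousOn.pow 2))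
  have hGcont : ContinuousOn Gn (Ici (t₁ / 2)) :=
    clampCont _ ((((hψ''cont.abs).comp continuous_fst).continuousOn).mul (hu.continuousOn.pow 2))
  have hEcont : ContinuousOn En (Ici (t₁ / 2)) :=
    clampCont _ ((((hψ.continuous.comp continuous_fst).continuousOn).mul
      (hu.continuousOn.pow 2)).mul ((hμs.continuous.comp continuous_fst).continuousOn))
  -- nonnegativity
  have hFnn : ∀ t, 0 ≤ Fn t := fun t =>
    intervalIntegral.integral_nonneg hRR fun x _ => mul_nonneg (hψpos x) (sq_nonneg _)
  have hGnn : ∀ t, 0 ≤ Gn t := fun t =>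
    intervalIntegral.integral_nonneg hRR fun x _ => mul_nonneg (abs_nonneg _) (sq_nonneg _)
  have hEnn : ∀ t, 0 ≤ En t := fun t =>
    intervalIntegral.integral_nonneg hRR fun x _ =>
      mul_nonneg (mul_nonneg (hψpos x) (sq_nonneg _)) (hμpos x).le
  -- integration by parts in space
  have hIBP : ∀ t : ℝ, 0 < t →
      ∫ x in (-R)..R, ψ x * u x t * g2 (x, t) = Hn t / 2 - Fn t := by
    intro t ht
    have hgc := hg_cx t ht
    have hg2c := hg2_cx t ht
    have huc := hu_cx t ht
    have hψc' : Continuous (deriv ψ) := hψ1.continuous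
    have int1 : IntervalIntegrable (fun x => deriv ψ x * u x t + ψ x * g (x, t)) volume (-R) R :=
      ((hψc'.mul huc).add (hψ.continuous.mul hgc)).intervalIntegrable _ _
    have int2 : IntervalIntegrable (fun x => g2 (x, t)) volume (-R) R :=
      hg2c.intervalIntegrable _ _
    have ibp1 := intervalIntegral.integral_mul_deriv_eq_deriv_mul
      (u := fun x => ψ x * u x t) (v := fun x => g (x, t))
      (u' := fun x => deriv ψ x * u x t + ψ x * g (x, t)) (v' := fun x => g2 (x, t))
      (fun x _ => ((hψd x).hasDerivAt.mul (hux x t ht)))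
      (fun x _ => hgx x t ht) int1 int2
    have hsq : ∀ x : ℝ, HasDerivAt (fun y => u y t ^ 2) (2 * u x t * g (x, t)) x := by
      intro x
      have h3 := (hux x t ht).fun_pow 2
      simpa using h3
    have int3 : IntervalIntegrable (iteratedDeriv 2 ψ) volume (-R) R :=
      hψ''cont.intervalIntegrable _ _
    have int4 : IntervalIntegrable (fun x => 2 * u x t * g (x, t)) volume (-R) R :=
      ((continuous_const.mul huc).mul hgc).intervalIntegrable _ _
    have ibp2 := intervalIntegral.integral_mul_deriv_eq_deriv_mul
      (u := deriv ψ) (v := fun x => u x t ^ 2)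
      (u' := iteratedDeriv 2 ψ) (v' := fun x => 2 * u x t * g (x, t))
      (fun x _ => hψ'' x) (fun x _ => hsq x) int3 int4
    have hb1 : ψ R = 0 := hψzero R (by simp)
    have hb2 : ψ (-R) = 0 := hψzero (-R) (by simp)
    have hb3 : deriv ψ R = 0 := hdψzero R (by simp)
    have hb4 : deriv ψ (-R) = 0 := hdψzero (-R) (by simp)
    simp only [hb1, hb2, hb3, hb4, zero_mul, mul_zero, sub_zero, zero_sub] at ibp1 ibp2
    have int5 : IntervalIntegrable (fun x => deriv ψ x * u x t * g (x, t)) volume (-R) R :=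
      ((hψc'.mul huc).mul hgc).intervalIntegrable _ _
    have int6 : IntervalIntegrable (fun x => ψ x * g (x, t) ^ 2) volume (-R) R :=
      (hψ.continuous.mul (hgc.pow 2)).intervalIntegrable _ _
    have split : ∫ x in (-R)..R, (deriv ψ x * u x t + ψ x * g (x, t)) * g (x, t)
        = (∫ x in (-R)..R, deriv ψ x * u x t * g (x, t))
          + ∫ x in (-R)..R, ψ x * g (x, t) ^ 2 := by
      rw [← intervalIntegral.integral_add int5 int6]
      apply intervalIntegral.integral_congr
      intro x _
      ring
    have half : ∫ x in (-R)..R, deriv ψ x * u x t * g (x, t)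
        = (1/2) * ∫ x in (-R)..R, deriv ψ x * (2 * u x t * g (x, t)) := by
      rw [← intervalIntegral.integral_const_mul]
      apply intervalIntegral.integral_congr
      intro x _
      ring
    simp only [hHndef, hFndef]
    linarith [ibp1, ibp2, split, half]
  -- differentiation under the integral sign
  have hE_deriv : ∀ t : ℝ, 0 < t → HasDerivAt En (Hn t / 2 - Fn t) t := by
    intro t ht
    have hball : ∀ s : ℝ, s ∈ Metric.ball t (t/2) → 0 < s := by
      intro s hs
      rw [Metric.mem_ball, Real.dist_eq, abs_lt] at hs
      linarith [hs.1]
    have hJcomp : IsCompact ((Icc (-R) R : Set ℝ) ×ˢ Icc (t/2) (3*t/2)) :=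
      isCompact_Icc.prod isCompact_Icc
    have hJsub : ((Icc (-R) R : Set ℝ) ×ˢ Icc (t/2) (3*t/2)) ⊆ (univ : Set ℝ) ×ˢ Ioi (0:ℝ) := by
      rintro ⟨x, s⟩ ⟨_, hs⟩
      refine ⟨mem_univ _, ?_⟩
      have h1 := hs.1
      simp only [mem_Ioi]
      linarith
    have hWcont : ContinuousOn (fun p : ℝ × ℝ => ψ p.1 * (2 * u p.1 p.2 * h p) * μ p.1)
        ((univ : Set ℝ) ×ˢ Ioi (0:ℝ)) :=
      ((hψ.continuous.comp continuous_fst).continuousOn.mul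
        ((continuousOn_const.mul hu.continuousOn).mul hhs.continuousOn)).mul
        ((hμs.continuous.comp continuous_fst).continuousOn)
    obtain ⟨C, hC⟩ := hJcomp.exists_bound_of_continuousOn (hWcont.mono hJsub)
    have key := intervalIntegral.hasDerivAt_integral_of_dominated_loc_of_deriv_le
      (F := fun s x => ψ x * u x s ^ 2 * μ x)
      (F' := fun s x => ψ x * (2 * u x s * h (x, s)) * μ x)
      (a := -R) (b := R) (x₀ := t) (s := Metric.ball t (t/2)) (bound := fun _ => C)
      (Metric.ball_mem_nhds t (by linarith))
      ((eventually_mem_nhds_iff.mpr (Ioi_mem_nhds ht)).mono fun s hs =>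
        (((hψ.continuous.mul ((hu_cx s (mem_of_mem_nhds hs : s ∈ Ioi 0)).pow 2)).mul
          hμs.continuous).aestronglyMeasurable).restrict)
      (((hψ.continuous.mul ((hu_cx t ht).pow 2)).mul hμs.continuous).intervalIntegrable _ _)
      (((hψ.continuous.mul ((continuous_const.mul (hu_cx t ht)).mul (hh_cx t ht))).mul
        hμs.continuous).aestronglyMeasurable).restrict
      (Filter.Eventually.of_forall fun x hx s hs => by
        apply hC (x, s)
        constructor
        · rw [uIoc_of_le hRR] at hx
          exact ⟨hx.1.le, hx.2⟩
        · rw [Metric.mem_ball, Real.dist_eq, abs_lt] at hs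
          constructor <;> [linarith [hs.1]; linarith [hs.2]])
      (intervalIntegrable_const (μ := volume))
      (Filter.Eventually.of_forall fun x _ s hs => by
        have hs0 : 0 < s := hball s hs
        have h3 := (((hut x s hs0).fun_pow 2).const_mul (ψ x)).mul_const (μ x)
        refine h3.congr_deriv ?_
        simp only [Nat.cast_ofNat, Nat.reduceSub, pow_one])
    have hval : (∫ x in (-R)..R, ψ x * (2 * u x t * h (x, t)) * μ x) = Hn t / 2 - Fn t := by
      rw [← hIBP t ht]
      apply intervalIntegral.integral_congr
      intro x _
      calc ψ x * (2 * u x t * h (x, t)) * μ x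
          = ψ x * u x t * (2 * μ x * h (x, t)) := by ring
        _ = ψ x * u x t * g2 (x, t) := by rw [hpde' x t ht]
    exact hval ▸ key.2
  -- interval integrability in time
  have subIci : ∀ a b : ℝ, t₁ / 2 ≤ a → t₁ / 2 ≤ b → uIcc a b ⊆ Ici (t₁ / 2) := by
    intro a b ha hb x hx
    have h1 : min a b ≤ x := hx.1
    exact le_trans (le_min ha hb) h1
  have hFint : ∀ a b : ℝ, t₁ / 2 ≤ a → t₁ / 2 ≤ b → IntervalIntegrable Fn volume a b :=
    fun a b ha hb => (hFcont.mono (subIci a b ha hb)).intervalIntegrable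
  have hHint : ∀ a b : ℝ, t₁ / 2 ≤ a → t₁ / 2 ≤ b → IntervalIntegrable Hn volume a b :=
    fun a b ha hb => (hHcont.mono (subIci a b ha hb)).intervalIntegrable
  have hGint : ∀ a b : ℝ, t₁ / 2 ≤ a → t₁ / 2 ≤ b → IntervalIntegrable Gn volume a b :=
    fun a b ha hb => (hGcont.mono (subIci a b ha hb)).intervalIntegrable
  have hEint : ∀ a b : ℝ, t₁ / 2 ≤ a → t₁ / 2 ≤ b → IntervalIntegrable En volume a b :=
    fun a b ha hb => (hEcont.mono (subIci a b ha hb)).intervalIntegrable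
  -- main estimate for each s in [t₁/2, t₁]
  have main : ∀ s ∈ Icc (t₁ / 2) t₁,
      (∫ τ in t₁..t₂, Fn τ) ≤ En s + (1 / 2) * ∫ τ in (t₁ / 2)..t₂, Gn τ := by
    intro s hs
    have hs0 : 0 < s := lt_of_lt_of_le hc hs.1
    have hst2 : s ≤ t₂ := le_trans hs.2 ht₁₂.le
    have hft : ∫ τ in s..t₂, (Hn τ / 2 - Fn τ) = En t₂ - En s := by
      apply intervalIntegral.integral_eq_sub_of_hasDerivAt
      · intro τ hτ
        rw [uIcc_of_le hst2] at hτ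
        exact hE_deriv τ (lt_of_lt_of_le hs0 hτ.1)
      · exact ((hHint s t₂ hs.1 (by linarith)).div_const 2).sub
          (hFint s t₂ hs.1 (by linarith))
    have h1 : ∫ τ in s..t₂, (Hn τ / 2 - Fn τ)
        = (∫ τ in s..t₂, Hn τ) / 2 - ∫ τ in s..t₂, Fn τ := by
      rw [intervalIntegral.integral_sub ((hHint s t₂ hs.1 (by linarith)).div_const 2)
        (hFint s t₂ hs.1 (by linarith)), intervalIntegral.integral_div]
    have hHG : (∫ τ in s..t₂, Hn τ) ≤ ∫ τ in s..t₂, Gn τ := by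
      apply intervalIntegral.integral_mono_on hst2 (hHint s t₂ hs.1 (by linarith))
        (hGint s t₂ hs.1 (by linarith))
      intro τ hτ
      have hτ0 : 0 < τ := lt_of_lt_of_le hs0 hτ.1
      simp only [hHndef, hGndef]
      apply intervalIntegral.integral_mono_on hRR
        ((hψ''cont.mul ((hu_cx τ hτ0).pow 2)).intervalIntegrable _ _)
        ((hψ''cont.abs.mul ((hu_cx τ hτ0).pow 2)).intervalIntegrable _ _)
      intro x _
      exact mul_le_mul_of_nonneg_right (le_abs_self _) (sq_nonneg _)
    have hGsplit : (∫ τ in s..t₂, Gn τ) ≤ ∫ τ in (t₁/2)..t₂, Gn τ := by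
      rw [← intervalIntegral.integral_add_adjacent_intervals
        (hGint (t₁/2) s le_rfl hs.1) (hGint s t₂ hs.1 (by linarith))]
      have h0 : 0 ≤ ∫ τ in (t₁/2)..s, Gn τ :=
        intervalIntegral.integral_nonneg hs.1 fun τ _ => hGnn τ
      linarith
    have hFsplit : (∫ τ in t₁..t₂, Fn τ) ≤ ∫ τ in s..t₂, Fn τ := by
      rw [← intervalIntegral.integral_add_adjacent_intervals
        (hFint s t₁ hs.1 (by linarith)) (hFint t₁ t₂ (by linarith) (by linarith))]
      have h0 : 0 ≤ ∫ τ in s..t₁, Fn τ :=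
        intervalIntegral.integral_nonneg hs.2 fun τ _ => hFnn τ
      linarith
    have hE2 : 0 ≤ En t₂ := hEnn t₂
    linarith
  -- integrate the estimate over s
  have hA := intervalIntegral.integral_mono_on (by linarith : t₁ / 2 ≤ t₁)
    intervalIntegrable_const
    ((hEint (t₁/2) t₁ le_rfl (by linarith)).add intervalIntegrable_const) main
  rw [intervalIntegral.integral_const,
    intervalIntegral.integral_add (hEint (t₁/2) t₁ le_rfl (by linarith))
      intervalIntegrable_const, intervalIntegral.integral_const] at hA
  -- rewrite the statement's integrals
  have eqF : (∫ t in t₁..t₂, ∫ x, ψ x * (deriv (fun y => u y t) x) ^ 2)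
      = ∫ t in t₁..t₂, Fn t := by
    apply intervalIntegral.integral_congr
    intro t ht
    have ht0 : 0 < t := lt_of_lt_of_le ht₁ (le_trans (le_min le_rfl ht₁₂.le) ht.1)
    simp only [hderiv_eq t ht0]
    exact integral_eq_intervalIntegral_of_support' hR0 fun x hx => by
      rw [hψzero x hx, zero_mul]
  have eqG : (∫ t in (t₁/2)..t₂, ∫ x, |iteratedDeriv 2 ψ x| * (u x t) ^ 2)
      = ∫ t in (t₁/2)..t₂, Gn t := by
    apply intervalIntegral.integral_congr
    intro t _
    exact integral_eq_intervalIntegral_of_support' hR0 fun x hx => by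
      rw [hd2ψzero x hx, abs_zero, zero_mul]
  have eqE : (∫ t in (t₁/2)..t₁, ∫ x, ψ x * (u x t) ^ 2 * μ x)
      = ∫ t in (t₁/2)..t₁, En t := by
    apply intervalIntegral.integral_congr
    intro t _
    exact integral_eq_intervalIntegral_of_support' hR0 fun x hx => by
      rw [hψzero x hx, zero_mul, zero_mul]
  rw [eqF, eqG, eqE]
  have h52 : t₁ - t₁ / 2 = t₁ / 2 := by ring
  rw [h52, smul_eq_mul, smul_eq_mul] at hA
  nlinarith [hA]
end

section
/- Let μ : ℝ → (0,∞) be a smooth strictly positive function and let u : ℝ×(0,∞) → ℝ be a smooth function satisfying 2 μ(x) ∂_t u(x,t) = ∂_xx u(x,t) for all (x,t) ∈ ℝ×(0,∞). Then for every smooth compactly supported ψ : ℝ → ℝ with ψ ≥ 0 and all 0 < t₁ < t₂: 2 t₁ ∫_{t₁}^{t₂} ∫_ℝ ψ(x) (∂_t u(x,t))² μ(x) dx dt ≤ ∫_{t₁/2}^{t₁} ∫_ℝ ψ(x) (∂_x u(x,t))² dx dt + (t₁/4) ∫_{t₁/2}^{t₂} ∫_ℝ |(ψ'(x)/μ(x))'|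 (∂_x u(x,t))² dx dt. -/
open MeasureTheory Set Function

open ContDiff

private lemma aux_integrable {g : ℝ → ℝ} {K : Set ℝ} (hK : IsCompact K)
    (hg : Continuous g) (h0 : ∀ x ∉ K, g x = 0) : Integrable g :=
  hg.integrable_of_hasCompactSupport (HasCompactSupport.intro hK h0)

private lemma aux_cont_slice {a : ℝ × ℝ → ℝ}
    (ha : ContinuousOn a (univ ×ˢ Ioi 0)) {t : ℝ} (ht : 0 < t) :
    Continuous fun x => a (x, t) :=
  ha.comp_continuous (continuous_id.prodMk continuous_const)
    (fun x => ⟨mem_univ x, ht⟩)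

private lemma aux_bound {b : ℝ × ℝ → ℝ} {K : Set ℝ} (hK : IsCompact K)
    (hb : ContinuousOn b (univ ×ˢ Ioi 0))
    {c d : ℝ} (hc : 0 < c) :
    ∃ C : ℝ, ∀ x ∈ K, ∀ t ∈ Icc c d, |b (x, t)| ≤ C := by
  have hQ : IsCompact (K ×ˢ Icc c d) := hK.prod isCompact_Icc
  have hQS : (K ×ˢ Icc c d : Set (ℝ × ℝ)) ⊆ univ ×ˢ Ioi 0 := by
    rintro ⟨x, t⟩ ⟨hx, ht⟩
    exact ⟨mem_univ _, lt_of_lt_of_le hc ht.1⟩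
  obtain ⟨C, hC⟩ := hQ.exists_bound_of_continuousOn (hb.mono hQS)
  exact ⟨C, fun x hx t ht => by
    simpa [Real.norm_eq_abs] using hC (x, t) ⟨hx, ht⟩⟩

private lemma aux_hasDerivAt_integral
    {a a' : ℝ × ℝ → ℝ} {K : Set ℝ} (hK : IsCompact K)
    (ha : ContinuousOn a (univ ×ˢ Ioi 0)) (ha' : ContinuousOn a' (univ ×ˢ Ioi 0))
    (h0 : ∀ x ∉ K, ∀ t, 0 < t → a (x, t) = 0)
    (h0' : ∀ x ∉ K, ∀ t, 0 < t → a' (x, t) = 0)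
    (hd : ∀ x : ℝ, ∀ t, 0 < t → HasDerivAt (fun τ => a (x, τ)) (a' (x, t)) t)
    {t₀ : ℝ} (ht₀ : 0 < t₀) :
    HasDerivAt (fun t => ∫ x, a (x, t)) (∫ x, a' (x, t₀)) t₀ := by
  obtain ⟨C, hC⟩ := aux_bound hK ha' (half_pos ht₀) (d := t₀ + t₀ / 2)
  have hball : ∀ t ∈ Metric.ball t₀ (t₀ / 2), t ∈ Icc (t₀ / 2) (t₀ + t₀ / 2) := by
    intro t ht
    rw [Metric.mem_ball, Real.dist_eq, abs_lt] at ht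
    constructor <;> linarith [ht.1, ht.2]
  have hball_pos : ∀ t ∈ Metric.ball t₀ (t₀ / 2), (0:ℝ) < t := fun t ht =>
    lt_of_lt_of_le (half_pos ht₀) (hball t ht).1
  have H := hasDerivAt_integral_of_dominated_loc_of_deriv_le (μ := volume)
    (F := fun t x => a (x, t)) (F' := fun t x => a' (x, t))
    (bound := K.indicator fun _ => C) (Metric.ball_mem_nhds t₀ (half_pos ht₀))
    (Filter.eventually_of_mem (Ioi_mem_nhds ht₀) (fun t ht =>
      (aux_cont_slice ha ht).aestronglyMeasurable))
    (aux_integrable hK (aux_cont_slice ha ht₀) (fun x hx => h0 x hx t₀ ht₀))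
    ((aux_cont_slice ha' ht₀).aestronglyMeasurable)
    (ae_of_all _ (fun x t ht => by
      by_cases hx : x ∈ K
      · simpa [indicator_of_mem hx, Real.norm_eq_abs] using hC x hx t (hball t ht)
      · simp [indicator_of_notMem hx, h0' x hx t (hball_pos t ht)]))
    ((integrable_indicator_iff hK.measurableSet).2
      (integrableOn_const hK.measure_lt_top.ne))
    (ae_of_all _ (fun x t ht => hd x t (hball_pos t ht)))
  exact H.2

private lemma aux_continuousAt_integral
    {a : ℝ × ℝ → ℝ} {K : Set ℝ} (hK : IsCompact K)
    (ha : ContinuousOn a (univ ×ˢ Ioi 0))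
    (h0 : ∀ x ∉ K, ∀ t, 0 < t → a (x, t) = 0)
    {t₀ : ℝ} (ht₀ : 0 < t₀) :
    ContinuousAt (fun t => ∫ x, a (x, t)) t₀ := by
  obtain ⟨C, hC⟩ := aux_bound hK ha (half_pos ht₀) (d := t₀ + t₀ / 2)
  have hIcc : Icc (t₀ / 2) (t₀ + t₀ / 2) ∈ nhds t₀ :=
    Icc_mem_nhds (by linarith) (by linarith)
  apply MeasureTheory.continuousAt_of_dominated (bound := K.indicator fun _ => C)
  · exact Filter.eventually_of_mem (Ioi_mem_nhds ht₀) (fun t ht =>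
      (aux_cont_slice ha ht).aestronglyMeasurable)
  · refine Filter.eventually_of_mem hIcc (fun t ht => ae_of_all _ (fun x => ?_))
    have htpos : (0:ℝ) < t := lt_of_lt_of_le (half_pos ht₀) ht.1
    by_cases hx : x ∈ K
    · simpa [indicator_of_mem hx, Real.norm_eq_abs] using hC x hx t ht
    · simp [indicator_of_notMem hx, h0 x hx t htpos]
  · exact (integrable_indicator_iff hK.measurableSet).2
      (integrableOn_const hK.measure_lt_top.ne)
  · refine ae_of_all _ (fun x => ?_)
    have : ContinuousAt a (x, t₀) :=
      ha.continuousAt ((isOpen_univ.prod isOpen_Ioi).mem_nhds ⟨mem_univ _, ht₀⟩)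
    exact this.comp ((continuous_const.prodMk continuous_id).continuousAt)

/-- Energy estimate (8.10) in Lemma 8.6: for a smooth solution `u` of `2 μ u_t = u_xx`
with smooth strictly positive `μ`, and any nonnegative smooth compactly supported `ψ`
and `0 < t₁ < t₂`,
`2t₁∫_{t₁}^{t₂}∫ ψ u_t² μ dx dt ≤ ∫_{t₁/2}^{t₁}∫ ψ u_x² dx dt + (t₁/4)∫_{t₁/2}^{t₂}∫ |(ψ'/μ)'| u_x² dx dt`. -/
theorem energy_estimate_time_derivative
    (μ : ℝ → ℝ) (hμs : ContDiff ℝ (⊤ : ℕ∞) μ) (hμpos : ∀ x : ℝ, 0 < μ x)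
    (u : ℝ → ℝ → ℝ)
    (hu : ContDiffOn ℝ (⊤ : ℕ∞) (uncurry u) (univ ×ˢ Ioi 0))
    (hpde : ∀ x : ℝ, ∀ t > (0:ℝ),
      2 * μ x * deriv (u x) t = iteratedDeriv 2 (fun y => u y t) x)
    (ψ : ℝ → ℝ) (hψ : ContDiff ℝ (⊤ : ℕ∞) ψ) (hψc : HasCompactSupport ψ)
    (hψpos : ∀ x : ℝ, 0 ≤ ψ x)
    (t₁ t₂ : ℝ) (ht₁ : 0 < t₁) (ht₁₂ : t₁ < t₂) :
    2 * t₁ * ∫ t in t₁..t₂, ∫ x, ψ x * (deriv (u x) t) ^ 2 * μ x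
      ≤ (∫ t in (t₁ / 2)..t₁, ∫ x, ψ x * (deriv (fun y => u y t) x) ^ 2)
        + (t₁ / 4) * ∫ t in (t₁ / 2)..t₂,
            ∫ x, |deriv (fun y => deriv ψ y / μ y) x| * (deriv (fun y => u y t) x) ^ 2 := by
  have hSopen : IsOpen ((univ ×ˢ Ioi 0 : Set (ℝ × ℝ))) := isOpen_univ.prod isOpen_Ioi
  have hmemS : ∀ (x t : ℝ), 0 < t → ((x, t) : ℝ × ℝ) ∈ (univ ×ˢ Ioi 0 : Set (ℝ × ℝ)) :=
    fun x t ht => ⟨mem_univ x, ht⟩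
  have hu' : ContDiffOn ℝ (∞ : WithTop ℕ∞) (uncurry u) (univ ×ˢ Ioi 0) := hu.of_le (by simp)
  have hDf : ContDiffOn ℝ ∞ (fderiv ℝ (uncurry u)) (univ ×ˢ Ioi 0) :=
    ((contDiffOn_infty_iff_fderiv_of_isOpen hSopen).1 hu').2
  set ux : ℝ × ℝ → ℝ := fun p => fderiv ℝ (uncurry u) p (1, 0) with hux_def
  set ut : ℝ × ℝ → ℝ := fun p => fderiv ℝ (uncurry u) p (0, 1) with hut_def
  have hux_smooth : ContDiffOn ℝ ∞ ux (univ ×ˢ Ioi 0) :=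
    (ContinuousLinearMap.apply ℝ ℝ ((1:ℝ), (0:ℝ))).contDiff.comp_contDiffOn hDf
  have hut_smooth : ContDiffOn ℝ ∞ ut (univ ×ˢ Ioi 0) :=
    (ContinuousLinearMap.apply ℝ ℝ ((0:ℝ), (1:ℝ))).contDiff.comp_contDiffOn hDf
  set uxx : ℝ × ℝ → ℝ := fun p => fderiv ℝ ux p (1, 0) with huxx_def
  set uxt : ℝ × ℝ → ℝ := fun p => fderiv ℝ ux p (0, 1) with huxt_def
  set utx : ℝ × ℝ → ℝ := fun p => fderiv ℝ ut p (1, 0) with hutx_def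
  have hDux : ContDiffOn ℝ ∞ (fderiv ℝ ux) (univ ×ˢ Ioi 0) :=
    ((contDiffOn_infty_iff_fderiv_of_isOpen hSopen).1 hux_smooth).2
  have hDut : ContDiffOn ℝ ∞ (fderiv ℝ ut) (univ ×ˢ Ioi 0) :=
    ((contDiffOn_infty_iff_fderiv_of_isOpen hSopen).1 hut_smooth).2
  have huxx_cont : ContinuousOn uxx (univ ×ˢ Ioi 0) :=
    ((ContinuousLinearMap.apply ℝ ℝ ((1:ℝ), (0:ℝ))).contDiff.comp_contDiffOn hDux).continuousOn
  have huxt_cont : ContinuousOn uxt (univ ×ˢ Ioi 0) :=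
    ((ContinuousLinearMap.apply ℝ ℝ ((0:ℝ), (1:ℝ))).contDiff.comp_contDiffOn hDux).continuousOn
  have hutx_cont : ContinuousOn utx (univ ×ˢ Ioi 0) :=
    ((ContinuousLinearMap.apply ℝ ℝ ((1:ℝ), (0:ℝ))).contDiff.comp_contDiffOn hDut).continuousOn
  have hux_cont : ContinuousOn ux (univ ×ˢ Ioi 0) := hux_smooth.continuousOn
  have hut_cont : ContinuousOn ut (univ ×ˢ Ioi 0) := hut_smooth.continuousOn
  have hfd : ∀ (x t : ℝ), 0 < t → DifferentiableAt ℝ (uncurry u) (x, t) := fun x t ht =>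
    (hu'.contDiffAt (hSopen.mem_nhds (hmemS x t ht))).differentiableAt (by norm_num)
  have huxd : ∀ (x t : ℝ), 0 < t → DifferentiableAt ℝ ux (x, t) := fun x t ht =>
    (hux_smooth.contDiffAt (hSopen.mem_nhds (hmemS x t ht))).differentiableAt (by norm_num)
  have hutd : ∀ (x t : ℝ), 0 < t → DifferentiableAt ℝ ut (x, t) := fun x t ht =>
    (hut_smooth.contDiffAt (hSopen.mem_nhds (hmemS x t ht))).differentiableAt (by norm_num)
  have hcurT : ∀ x t : ℝ, HasDerivAt (fun τ : ℝ => ((x, τ) : ℝ × ℝ)) (0, 1) t :=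
    fun x t => (hasDerivAt_const t x).prodMk (hasDerivAt_id t)
  have hcurX : ∀ x t : ℝ, HasDerivAt (fun y : ℝ => ((y, t) : ℝ × ℝ)) (1, 0) x :=
    fun x t => (hasDerivAt_id x).prodMk (hasDerivAt_const x t)
  have hut_cur : ∀ (x t : ℝ), 0 < t → HasDerivAt (u x) (ut (x, t)) t := fun x t ht =>
    ((hfd x t ht).hasFDerivAt.comp_hasDerivAt t (hcurT x t))
  have hux_cur : ∀ (x t : ℝ), 0 < t → HasDerivAt (fun y => u y t) (ux (x, t)) x := fun x t ht => by
    have := ((hfd x t ht).hasFDerivAt.comp_hasDerivAt x (hcurX x t)); exact this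
  have huxx_cur : ∀ (x t : ℝ), 0 < t → HasDerivAt (fun y => ux (y, t)) (uxx (x, t)) x :=
    fun x t ht => by have := ((huxd x t ht).hasFDerivAt.comp_hasDerivAt x (hcurX x t)); exact this
  have huxt_cur : ∀ (x t : ℝ), 0 < t → HasDerivAt (fun τ => ux (x, τ)) (uxt (x, t)) t :=
    fun x t ht => ((huxd x t ht).hasFDerivAt.comp_hasDerivAt t (hcurT x t))
  have hutx_cur : ∀ (x t : ℝ), 0 < t → HasDerivAt (fun y => ut (y, t)) (utx (x, t)) x :=
    fun x t ht => by have := ((hutd x t ht).hasFDerivAt.comp_hasDerivAt x (hcurX x t)); exact this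
  have hpde2 : ∀ (x t : ℝ), 0 < t → 2 * μ x * ut (x, t) = uxx (x, t) := by
    intro x t ht
    have h1 : deriv (u x) t = ut (x, t) := (hut_cur x t ht).deriv
    have h2 : deriv (fun y => u y t) = fun y => ux (y, t) :=
      funext fun y => (hux_cur y t ht).deriv
    have h3 : iteratedDeriv 2 (fun y => u y t) x = uxx (x, t) := by
      rw [show (2 : ℕ) = 1 + 1 from rfl, iteratedDeriv_succ, iteratedDeriv_one, h2]
      exact (huxx_cur x t ht).deriv
    rw [← h1, ← h3] at *
    exact hpde x t ht
  have hsymm : ∀ (x t : ℝ), 0 < t → uxt (x, t) = utx (x, t) := by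
    intro x t ht
    have hcd : ContDiffAt ℝ 2 (uncurry u) (x, t) :=
      (hu.contDiffAt (hSopen.mem_nhds (hmemS x t ht))).of_le (WithTop.coe_le_coe.2 le_top)
    have hs := hcd.isSymmSndFDerivAt (by simp [minSmoothness_of_isRCLikeNormedField])
    have hDfd : DifferentiableAt ℝ (fderiv ℝ (uncurry u)) (x, t) :=
      (hDf.contDiffAt (hSopen.mem_nhds (hmemS x t ht))).differentiableAt (by norm_num)
    have e1 : fderiv ℝ ux (x, t) =
        (ContinuousLinearMap.apply ℝ ℝ ((1:ℝ), (0:ℝ))).comp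
          (fderiv ℝ (fderiv ℝ (uncurry u)) (x, t)) :=
      ((ContinuousLinearMap.apply ℝ ℝ ((1:ℝ), (0:ℝ))).hasFDerivAt.comp (x, t)
        hDfd.hasFDerivAt).fderiv
    have e2 : fderiv ℝ ut (x, t) =
        (ContinuousLinearMap.apply ℝ ℝ ((0:ℝ), (1:ℝ))).comp
          (fderiv ℝ (fderiv ℝ (uncurry u)) (x, t)) :=
      ((ContinuousLinearMap.apply ℝ ℝ ((0:ℝ), (1:ℝ))).hasFDerivAt.comp (x, t)
        hDfd.hasFDerivAt).fderiv
    have := hs.eq ((0:ℝ), (1:ℝ)) ((1:ℝ), (0:ℝ))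
    simp only [huxt_def, hutx_def, e1, e2, ContinuousLinearMap.comp_apply,
      ContinuousLinearMap.apply_apply]
    exact this
  -- ψ and φ
  have hμi : ContDiff ℝ ∞ μ := hμs.of_le (by simp)
  have hψi : ContDiff ℝ ∞ ψ := hψ.of_le (by simp)
  have hψd : ContDiff ℝ ∞ (deriv ψ) := (contDiff_infty_iff_deriv.1 hψi).2
  set φ : ℝ → ℝ := fun y => deriv ψ y / μ y with hφ_def
  have hφ : ContDiff ℝ ∞ φ := hψd.div hμi (fun y => (hμpos y).ne')
  have hφc : HasCompactSupport φ := by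
    have : HasCompactSupport (deriv ψ) := hψc.deriv
    exact this.mul_right
  have hφd : ContDiff ℝ ∞ (deriv φ) := (contDiff_infty_iff_deriv.1 hφ).2
  set K : Set ℝ := tsupport ψ ∪ tsupport φ with hK_def
  have hK : IsCompact K := hψc.union hφc
  have hψK : ∀ x ∉ K, ψ x = 0 := fun x hx =>
    image_eq_zero_of_notMem_tsupport (fun h => hx (Or.inl h))
  have hψ'K : ∀ x ∉ K, deriv ψ x = 0 := fun x hx =>
    notMem_support.1 (fun h => hx (Or.inl (support_deriv_subset h)))
  have hφK : ∀ x ∉ K, φ x = 0 := fun x hx =>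
    image_eq_zero_of_notMem_tsupport (fun h => hx (Or.inr h))
  have hφ'K : ∀ x ∉ K, deriv φ x = 0 := fun x hx =>
    notMem_support.1 (fun h => hx (Or.inr (support_deriv_subset h)))
  -- the four integrand functions
  set Ag : ℝ × ℝ → ℝ := fun p => ψ p.1 * (ux p) ^ 2 with hAg_def
  set Bg : ℝ × ℝ → ℝ := fun p => ψ p.1 * (2 * ux p * uxt p) with hBg_def
  set Gg : ℝ × ℝ → ℝ := fun p => ψ p.1 * (ut p) ^ 2 * μ p.1 with hGg_def
  set Hg : ℝ × ℝ → ℝ := fun p => deriv φ p.1 * (ux p) ^ 2 with hHg_def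
  set Fg : ℝ × ℝ → ℝ := fun p => |deriv φ p.1| * (ux p) ^ 2 with hFg_def
  have hψcont : Continuous ψ := hψi.continuous
  have hAg_cont : ContinuousOn Ag (univ ×ˢ Ioi 0) :=
    (hψcont.comp continuous_fst).continuousOn.mul (hux_cont.pow 2)
  have hBg_cont : ContinuousOn Bg (univ ×ˢ Ioi 0) :=
    (hψcont.comp continuous_fst).continuousOn.mul
      ((continuousOn_const.mul hux_cont).mul huxt_cont)
  have hGg_cont : ContinuousOn Gg (univ ×ˢ Ioi 0) :=
    ((hψcont.comp continuous_fst).continuousOn.mul (hut_cont.pow 2)).mul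
      (hμi.continuous.comp continuous_fst).continuousOn
  have hHg_cont : ContinuousOn Hg (univ ×ˢ Ioi 0) :=
    (hφd.continuous.comp continuous_fst).continuousOn.mul (hux_cont.pow 2)
  have hFg_cont : ContinuousOn Fg (univ ×ˢ Ioi 0) :=
    ((hφd.continuous.abs).comp continuous_fst).continuousOn.mul (hux_cont.pow 2)
  have hAg0 : ∀ x ∉ K, ∀ t, 0 < t → Ag (x, t) = 0 := fun x hx t _ => by
    simp [hAg_def, hψK x hx]
  have hBg0 : ∀ x ∉ K, ∀ t, 0 < t → Bg (x, t) = 0 := fun x hx t _ => by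
    simp [hBg_def, hψK x hx]
  have hGg0 : ∀ x ∉ K, ∀ t, 0 < t → Gg (x, t) = 0 := fun x hx t _ => by
    simp [hGg_def, hψK x hx]
  have hHg0 : ∀ x ∉ K, ∀ t, 0 < t → Hg (x, t) = 0 := fun x hx t _ => by
    simp [hHg_def, hφ'K x hx]
  have hFg0 : ∀ x ∉ K, ∀ t, 0 < t → Fg (x, t) = 0 := fun x hx t _ => by
    simp [hFg_def, hφ'K x hx]
  set E : ℝ → ℝ := fun t => ∫ x, Ag (x, t) with hE_def
  set G : ℝ → ℝ := fun t => ∫ x, Gg (x, t) with hG_def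
  set H : ℝ → ℝ := fun t => ∫ x, Hg (x, t) with hH_def
  set F : ℝ → ℝ := fun t => ∫ x, Fg (x, t) with hF_def
  have hψder : ∀ x, HasDerivAt ψ (deriv ψ x) x := fun x =>
    ((hψi.differentiable (by norm_num)) x).hasDerivAt
  have hφder : ∀ x, HasDerivAt φ (deriv φ x) x := fun x =>
    ((hφ.differentiable (by norm_num)) x).hasDerivAt
  -- the key integration-by-parts identity
  have hibp : ∀ t, 0 < t → ∫ x, Bg (x, t) = (1/2) * H t - 4 * G t := by
    intro t ht
    have cux : Continuous fun x => ux (x, t) := aux_cont_slice hux_cont ht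
    have cut : Continuous fun x => ut (x, t) := aux_cont_slice hut_cont ht
    have cuxx : Continuous fun x => uxx (x, t) := aux_cont_slice huxx_cont ht
    have cutx : Continuous fun x => utx (x, t) := aux_cont_slice hutx_cont ht
    -- first integration by parts
    have hU : ∀ x : ℝ, HasDerivAt (fun y => 2 * ψ y * ux (y, t))
        (2 * deriv ψ x * ux (x, t) + 2 * ψ x * uxx (x, t)) x := by
      intro x
      have := ((hψder x).const_mul 2).mul (huxx_cur x t ht)
      exact this
    have hUV' : Integrable ((fun y => 2 * ψ y * ux (y, t)) * fun y => utx (y, t)) := by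
      apply aux_integrable hK (((continuous_const.mul hψcont).mul cux).mul cutx)
      intro x hx; simp [hψK x hx]
    have hU'V : Integrable ((fun y => 2 * deriv ψ y * ux (y, t) + 2 * ψ y * uxx (y, t))
        * fun y => ut (y, t)) := by
      apply aux_integrable hK
        ((((continuous_const.mul (hψd.continuous)).mul cux).add
          ((continuous_const.mul hψcont).mul cuxx)).mul cut)
      intro x hx; simp [hψK x hx, hψ'K x hx]
    have hUV : Integrable ((fun y => 2 * ψ y * ux (y, t)) * fun y => ut (y, t)) := by
      apply aux_integrable hK (((continuous_const.mul hψcont).mul cux).mul cut)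
      intro x hx; simp [hψK x hx]
    have h1 := MeasureTheory.integral_mul_deriv_eq_deriv_mul_of_integrable
      (fun x _ => hU x) (fun x _ => hutx_cur x t ht) hUV' hU'V hUV
    -- second integration by parts
    have hV₂ : ∀ x : ℝ, HasDerivAt (fun y => ux (y, t) ^ 2)
        (2 * ux (x, t) * uxx (x, t)) x := by
      intro x
      have := (huxx_cur x t ht).pow 2
      rw [show (2:ℝ) * ux (x, t) * uxx (x, t) = ((2:ℕ):ℝ) * ux (x, t) ^ (2 - 1) * uxx (x, t) by
        norm_num]
      exact this
    have hW1 : Integrable (φ * fun y => 2 * ux (y, t) * uxx (y, t)) := by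
      apply aux_integrable hK (hφ.continuous.mul ((continuous_const.mul cux).mul cuxx))
      intro x hx; simp [hφK x hx]
    have hW2 : Integrable (deriv φ * fun y => ux (y, t) ^ 2) := by
      apply aux_integrable hK (hφd.continuous.mul (cux.pow 2))
      intro x hx; simp [hφ'K x hx]
    have hW3 : Integrable (φ * fun y => ux (y, t) ^ 2) := by
      apply aux_integrable hK (hφ.continuous.mul (cux.pow 2))
      intro x hx; simp [hφK x hx]
    have h2 := MeasureTheory.integral_mul_deriv_eq_deriv_mul_of_integrable
      (fun x _ => hφder x) (fun x _ => hV₂ x) hW1 hW2 hW3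
    -- identify the integrals
    have e0 : ∫ x, Bg (x, t) = ∫ x, 2 * ψ x * ux (x, t) * utx (x, t) := by
      apply integral_congr_ae; apply ae_of_all; intro x
      simp only [hBg_def]
      rw [← hsymm x t ht]
      ring
    have eA1 : Integrable (fun x => 2 * deriv ψ x * ux (x, t) * ut (x, t)) := by
      apply aux_integrable hK (((continuous_const.mul hψd.continuous).mul cux).mul cut)
      intro x hx; simp [hψ'K x hx]
    have eA2 : Integrable (fun x => 2 * ψ x * uxx (x, t) * ut (x, t)) := by
      apply aux_integrable hK (((continuous_const.mul hψcont).mul cuxx).mul cut)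
      intro x hx; simp [hψK x hx]
    have esplit : ∫ x, (2 * deriv ψ x * ux (x, t) + 2 * ψ x * uxx (x, t)) * ut (x, t)
        = (∫ x, 2 * deriv ψ x * ux (x, t) * ut (x, t))
          + ∫ x, 2 * ψ x * uxx (x, t) * ut (x, t) := by
      rw [← integral_add eA1 eA2]
      apply integral_congr_ae; apply ae_of_all; intro x
      ring_nf
    have eG : ∫ x, 2 * ψ x * uxx (x, t) * ut (x, t) = 4 * G t := by
      have : (4:ℝ) * G t = ∫ x, 4 * Gg (x, t) := (MeasureTheory.integral_const_mul 4 _).symm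
      rw [this]
      apply integral_congr_ae; apply ae_of_all; intro x
      simp only [hGg_def]
      rw [← hpde2 x t ht]
      ring
    have eH : ∫ x, 2 * deriv ψ x * ux (x, t) * ut (x, t)
        = (1/2) * ∫ x, φ x * (2 * ux (x, t) * uxx (x, t)) := by
      rw [← MeasureTheory.integral_const_mul]
      apply integral_congr_ae; apply ae_of_all; intro x
      simp only [hφ_def]
      rw [← hpde2 x t ht]
      have hμx := (hμpos x).ne'
      field_simp
    have eH2 : ∫ x, deriv φ x * ux (x, t) ^ 2 = H t := by
      rw [hH_def]
    rw [e0, h1, esplit, eG, eH, h2, eH2]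
    ring
  have hAgd : ∀ x : ℝ, ∀ t, 0 < t → HasDerivAt (fun τ => Ag (x, τ)) (Bg (x, t)) t := by
    intro x t ht
    have := ((huxt_cur x t ht).pow 2).const_mul (ψ x)
    rw [show Bg (x, t) = ψ x * (((2:ℕ):ℝ) * ux (x, t) ^ (2 - 1) * uxt (x, t)) by
      show ψ x * (2 * ux (x, t) * uxt (x, t)) = _
      norm_num]
    exact this
  have hE' : ∀ t, 0 < t → HasDerivAt E ((1/2) * H t - 4 * G t) t := by
    intro t ht
    have := aux_hasDerivAt_integral hK hAg_cont hBg_cont hAg0 hBg0 hAgd ht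
    rwa [hibp t ht] at this
  -- continuity of the time slices
  have hGc : ∀ t, 0 < t → ContinuousAt G t := fun t ht =>
    aux_continuousAt_integral hK hGg_cont hGg0 ht
  have hHc : ∀ t, 0 < t → ContinuousAt H t := fun t ht =>
    aux_continuousAt_integral hK hHg_cont hHg0 ht
  have hFc : ∀ t, 0 < t → ContinuousAt F t := fun t ht =>
    aux_continuousAt_integral hK hFg_cont hFg0 ht
  have hEc : ∀ t, 0 < t → ContinuousAt E t := fun t ht => (hE' t ht).continuousAt
  -- nonnegativity
  have hGnn : ∀ t, 0 ≤ G t := fun t => integral_nonneg fun x =>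
    mul_nonneg (mul_nonneg (hψpos x) (sq_nonneg _)) (hμpos x).le
  have hEnn : ∀ t, 0 ≤ E t := fun t => integral_nonneg fun x =>
    mul_nonneg (hψpos x) (sq_nonneg _)
  have hFnn : ∀ t, 0 ≤ F t := fun t => integral_nonneg fun x =>
    mul_nonneg (abs_nonneg _) (sq_nonneg _)
  have hHF : ∀ t, 0 < t → H t ≤ F t := by
    intro t ht
    apply integral_mono
      (aux_integrable hK (aux_cont_slice hHg_cont ht) (fun x hx => hHg0 x hx t ht))
      (aux_integrable hK (aux_cont_slice hFg_cont ht) (fun x hx => hFg0 x hx t ht))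
    intro x
    exact mul_le_mul_of_nonneg_right (le_abs_self _) (sq_nonneg _)
  -- interval integrability
  have hii : ∀ (g : ℝ → ℝ), (∀ t, 0 < t → ContinuousAt g t) → ∀ a b : ℝ, 0 < a → 0 < b →
      IntervalIntegrable g volume a b := by
    intro g hg a b ha hb
    apply ContinuousOn.intervalIntegrable
    intro t htm
    rw [uIcc_eq_union] at htm
    have : 0 < t := by
      rcases htm with h | h
      · exact lt_of_lt_of_le ha h.1
      · exact lt_of_lt_of_le hb h.1
    exact (hg t this).continuousWithinAt
  -- fundamental theorem of calculus
  have hftc : ∀ a b : ℝ, 0 < a → a ≤ b →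
      (1/2) * (∫ τ in a..b, H τ) - 4 * (∫ τ in a..b, G τ) = E b - E a := by
    intro a b ha hab
    have hb : 0 < b := lt_of_lt_of_le ha hab
    have hInt : IntervalIntegrable (fun τ => (1/2) * H τ - 4 * G τ) volume a b :=
      ((hii H hHc a b ha hb).const_mul (1/2)).sub ((hii G hGc a b ha hb).const_mul 4)
    have := intervalIntegral.integral_eq_sub_of_hasDerivAt (f := E)
      (f' := fun τ => (1/2) * H τ - 4 * G τ) (a := a) (b := b) ?_ hInt
    · rw [← this, intervalIntegral.integral_sub ((hii H hHc a b ha hb).const_mul (1/2))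
        ((hii G hGc a b ha hb).const_mul 4), intervalIntegral.integral_const_mul,
        intervalIntegral.integral_const_mul]
    · intro τ hτ
      rw [uIcc_of_le hab] at hτ
      exact hE' τ (lt_of_lt_of_le ha hτ.1)
  have ht₁2 : (0:ℝ) < t₁ / 2 := half_pos ht₁
  have ht₂ : (0:ℝ) < t₂ := ht₁.trans ht₁₂
  -- Step 1 : main interval
  have h1 : 4 * (∫ τ in t₁..t₂, G τ) ≤ (1/2) * (∫ τ in t₁..t₂, F τ) + E t₁ := by
    have hHleF : (∫ τ in t₁..t₂, H τ) ≤ ∫ τ in t₁..t₂, F τ := by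
      apply intervalIntegral.integral_mono_on ht₁₂.le
        (hii H hHc t₁ t₂ ht₁ ht₂) (hii F hFc t₁ t₂ ht₁ ht₂)
      intro τ hτ
      exact hHF τ (lt_of_lt_of_le ht₁ hτ.1)
    have := hftc t₁ t₂ ht₁ ht₁₂.le
    have hE2 := hEnn t₂
    linarith
  -- Step 2 : bound E t₁ by its average on [t₁/2, t₁]
  have h2 : ∀ s ∈ Icc (t₁/2) t₁, E t₁ ≤ E s + (1/2) * ∫ τ in (t₁/2)..t₁, F τ := by
    intro s hs
    have hspos : 0 < s := lt_of_lt_of_le ht₁2 hs.1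
    have hftc2 := hftc s t₁ hspos hs.2
    have hHleF : (∫ τ in s..t₁, H τ) ≤ ∫ τ in s..t₁, F τ := by
      apply intervalIntegral.integral_mono_on hs.2
        (hii H hHc s t₁ hspos ht₁) (hii F hFc s t₁ hspos ht₁)
      intro τ hτ
      exact hHF τ (lt_of_lt_of_le hspos hτ.1)
    have hGpos : 0 ≤ ∫ τ in s..t₁, G τ :=
      intervalIntegral.integral_nonneg hs.2 (fun τ _ => hGnn τ)
    have hFext : (∫ τ in s..t₁, F τ) ≤ ∫ τ in (t₁/2)..t₁, F τ := by
      have hadd := intervalIntegral.integral_add_adjacent_intervals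
        (hii F hFc (t₁/2) s ht₁2 hspos) (hii F hFc s t₁ hspos ht₁)
      have hnn : 0 ≤ ∫ τ in (t₁/2)..s, F τ :=
        intervalIntegral.integral_nonneg hs.1 (fun τ _ => hFnn τ)
      linarith
    linarith
  -- Step 3 : integrate step 2 in s
  have h3 : (t₁/2) * E t₁ ≤ (∫ s in (t₁/2)..t₁, E s)
      + (t₁/2) * ((1/2) * ∫ τ in (t₁/2)..t₁, F τ) := by
    have hle : t₁/2 ≤ t₁ := by linarith
    have hEi : IntervalIntegrable E volume (t₁/2) t₁ := hii E hEc (t₁/2) t₁ ht₁2 ht₁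
    have hmono := intervalIntegral.integral_mono_on hle
      (intervalIntegrable_const (c := E t₁))
      (hEi.add (intervalIntegrable_const (c := (1/2) * ∫ τ in (t₁/2)..t₁, F τ)))
      (fun s hs => h2 s hs)
    rw [intervalIntegral.integral_const, intervalIntegral.integral_add hEi
      intervalIntegrable_const, intervalIntegral.integral_const] at hmono
    have e1 : t₁ - t₁/2 = t₁/2 := by ring
    rw [e1] at hmono
    simpa [smul_eq_mul] using hmono
  -- adjacent intervals for F
  have hadj : (∫ τ in (t₁/2)..t₂, F τ)
      = (∫ τ in (t₁/2)..t₁, F τ) + ∫ τ in t₁..t₂, F τ := by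
    rw [← intervalIntegral.integral_add_adjacent_intervals
      (hii F hFc (t₁/2) t₁ ht₁2 ht₁) (hii F hFc t₁ t₂ ht₁ ht₂)]
  -- rewrite the goal
  have egoal1 : (∫ t in t₁..t₂, ∫ x, ψ x * (deriv (u x) t) ^ 2 * μ x)
      = ∫ τ in t₁..t₂, G τ := by
    apply intervalIntegral.integral_congr
    intro t htm
    rw [uIcc_of_le ht₁₂.le] at htm
    have ht : 0 < t := lt_of_lt_of_le ht₁ htm.1
    have : (fun x => ψ x * (deriv (u x) t) ^ 2 * μ x) = fun x => Gg (x, t) :=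
      funext fun x => by rw [(hut_cur x t ht).deriv]
    show (∫ x, ψ x * (deriv (u x) t) ^ 2 * μ x) = G t
    rw [this]
  have egoal2 : (∫ t in (t₁/2)..t₁, ∫ x, ψ x * (deriv (fun y => u y t) x) ^ 2)
      = ∫ s in (t₁/2)..t₁, E s := by
    apply intervalIntegral.integral_congr
    intro t htm
    rw [uIcc_of_le (by linarith : t₁/2 ≤ t₁)] at htm
    have ht : 0 < t := lt_of_lt_of_le ht₁2 htm.1
    have : (fun x => ψ x * (deriv (fun y => u y t) x) ^ 2) = fun x => Ag (x, t) :=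
      funext fun x => by rw [(hux_cur x t ht).deriv]
    show (∫ x, ψ x * (deriv (fun y => u y t) x) ^ 2) = E t
    rw [this]
  have egoal3 : (∫ t in (t₁/2)..t₂, ∫ x, |deriv φ x| * (deriv (fun y => u y t) x) ^ 2)
      = ∫ τ in (t₁/2)..t₂, F τ := by
    apply intervalIntegral.integral_congr
    intro t htm
    rw [uIcc_of_le (by linarith : t₁/2 ≤ t₂)] at htm
    have ht : 0 < t := lt_of_lt_of_le ht₁2 htm.1
    have : (fun x => |deriv φ x| * (deriv (fun y => u y t) x) ^ 2) = fun x => Fg (x, t) :=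
      funext fun x => by rw [(hux_cur x t ht).deriv]
    show (∫ x, |deriv φ x| * (deriv (fun y => u y t) x) ^ 2) = F t
    rw [this]
  rw [egoal1, egoal2, egoal3, hadj]
  nlinarith [h1, h3, mul_le_mul_of_nonneg_left h1 (le_of_lt ht₁)]
end

section
/- Let m = δ₀ + λ, where δ₀ is the Dirac measure at 0 and λ is Lebesgue measure on ℝ, and let U(x,t) = |x| + x² + t on ℝ×[0,∞). Then U is continuous, U(x,0) = |x| + x², and U solves 2m U_t = U_xx in the distributional sense on ℝ×(0,∞): for every smooth compactly supported φ : ℝ×(0,∞) → ℝ, −2∫∫ U(x,t) ∂_t φ(x,t) m(dx) dt = ∫∫ U(x,t) ∂_xx φ(x,t) dx dt. -/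
open MeasureTheory Set Function Filter

noncomputable section

lemma myIntg {u v : ℝ → ℝ} (hu : Continuous u) (hv : Continuous v)
    (hcs : HasCompactSupport v) : Integrable (fun x => u x * v x) :=
  (hu.mul hv).integrable_of_hasCompactSupport hcs.mul_left

lemma aux_t (c : ℝ) (f : ℝ → ℝ) (hf : ContDiff ℝ (⊤ : ℕ∞) f) (hcs : HasCompactSupport f) :
    ∫ t, (c + t) * deriv f t = - ∫ t, f t := by
  have hd : ∀ t, HasDerivAt f (deriv f t) t := fun t => (hf.differentiable (by simp) t).hasDerivAt
  have hu : ∀ t : ℝ, HasDerivAt (fun s : ℝ => c + s) 1 t := fun t =>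
    (hasDerivAt_id t).const_add c
  have h1 : Integrable (fun t => (c + t) * deriv f t) :=
    myIntg (by fun_prop) (hf.continuous_deriv (by exact_mod_cast le_top)) hcs.deriv
  have h2 : Integrable (fun t : ℝ => (1:ℝ) * f t) := myIntg (by fun_prop) hf.continuous hcs
  have h3 : Integrable (fun t => (c + t) * f t) := myIntg (by fun_prop) hf.continuous hcs
  have := integral_mul_deriv_eq_deriv_mul_of_integrable (fun t _ => hu t) (fun t _ => hd t) h1 h2 h3
  simp only [one_mul] at this ⊢
  rw [this]


lemma myTendsto {u v : ℝ → ℝ} (hu : Continuous u) (hv : Continuous v)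
    (hcs : HasCompactSupport v) (l : Filter ℝ) (hl : l ≤ cocompact ℝ) :
    Tendsto (u * v) l (nhds 0) := by
  have h : HasCompactSupport (u * v) := hcs.mul_left
  rw [hasCompactSupport_iff_eventuallyEq, Filter.coclosedCompact_eq_cocompact] at h
  exact (h.filter_mono hl).tendsto

lemma aux_x (t : ℝ) (g : ℝ → ℝ) (hg : ContDiff ℝ (⊤ : ℕ∞) g) (hcs : HasCompactSupport g) :
    ∫ x, (|x| + x ^ 2 + t) * iteratedDeriv 2 g x = 2 * g 0 + 2 * ∫ x, g x := by
  have h1 : (1 : WithTop ℕ∞) ≤ (⊤ : ℕ∞) := by exact_mod_cast le_top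
  have hg' : ContDiff ℝ (⊤ : ℕ∞) (deriv g) := (contDiff_infty_iff_deriv.mp hg).2
  have hcg' : Continuous (deriv g) := hg'.continuous
  have hcg'' : Continuous (deriv (deriv g)) := hg'.continuous_deriv h1
  have hd : ∀ x, HasDerivAt g (deriv g x) x := fun x => (hg.differentiable (by simp) x).hasDerivAt
  have hd' : ∀ x, HasDerivAt (deriv g) (deriv (deriv g) x) x :=
    fun x => (hg'.differentiable (by simp) x).hasDerivAt
  have hit : iteratedDeriv 2 g = deriv (deriv g) := by
    rw [iteratedDeriv_succ, iteratedDeriv_one]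
  rw [hit]
  -- split the integral
  have hintAbs : Integrable (fun x => |x| * deriv (deriv g) x) :=
    myIntg continuous_abs hcg'' hcs.deriv.deriv
  have hintP : Integrable (fun x => (x ^ 2 + t) * deriv (deriv g) x) :=
    myIntg (by fun_prop) hcg'' hcs.deriv.deriv
  have hsplit : ∫ x, (|x| + x ^ 2 + t) * deriv (deriv g) x
      = (∫ x, |x| * deriv (deriv g) x) + ∫ x, (x ^ 2 + t) * deriv (deriv g) x := by
    rw [← integral_add hintAbs hintP]
    congr 1; funext x; ring
  -- part 2 : ∫ (x²+t) g'' = 2 ∫ g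
  have part2 : ∫ x, (x ^ 2 + t) * deriv (deriv g) x = 2 * ∫ x, g x := by
    have hu : ∀ x : ℝ, HasDerivAt (fun s : ℝ => s ^ 2 + t) (2 * x) x := by
      intro x
      simpa using ((hasDerivAt_pow 2 x).add_const t)
    have e1 := integral_mul_deriv_eq_deriv_mul_of_integrable (fun x _ => hu x) (fun x _ => hd' x)
      (myIntg (by fun_prop) hcg'' hcs.deriv.deriv)
      (myIntg (by fun_prop) hcg' hcs.deriv)
      (myIntg (by fun_prop) hcg' hcs.deriv)
    have hu2 : ∀ x : ℝ, HasDerivAt (fun s : ℝ => 2 * s) 2 x := by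
      intro x; simpa using (hasDerivAt_id x).const_mul (2:ℝ)
    have e2 := integral_mul_deriv_eq_deriv_mul_of_integrable (fun x _ => hu2 x) (fun x _ => hd x)
      (myIntg (by fun_prop) hcg' hcs.deriv)
      (myIntg (by fun_prop) hg.continuous hcs)
      (myIntg (by fun_prop) hg.continuous hcs)
    rw [e1, e2, neg_neg, integral_const_mul]
  -- part 1 : ∫ |x| g'' = 2 g 0
  have part1 : ∫ x, |x| * deriv (deriv g) x = 2 * g 0 := by
    have hIic : IntegrableOn (fun x => |x| * deriv (deriv g) x) (Iic 0) :=
      hintAbs.integrableOn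
    have hIoi : IntegrableOn (fun x => |x| * deriv (deriv g) x) (Ioi 0) :=
      hintAbs.integrableOn
    rw [← intervalIntegral.integral_Iic_add_Ioi hIic hIoi]
    have hIicEq : ∫ x in Iic (0:ℝ), |x| * deriv (deriv g) x
        = ∫ x in Iic (0:ℝ), (-x) * deriv (deriv g) x := by
      apply setIntegral_congr_fun measurableSet_Iic
      intro x hx
      simp only []
      rw [abs_of_nonpos (mem_Iic.mp hx)]
    have hIoiEq : ∫ x in Ioi (0:ℝ), |x| * deriv (deriv g) x
        = ∫ x in Ioi (0:ℝ), x * deriv (deriv g) x := by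
      apply setIntegral_congr_fun measurableSet_Ioi
      intro x hx
      simp only []
      rw [abs_of_pos (mem_Ioi.mp hx)]
    -- Iic side
    have hIicVal : ∫ x in Iic (0:ℝ), (-x) * deriv (deriv g) x = g 0 := by
      have hu : ∀ x ∈ Iio (0:ℝ), HasDerivAt (fun s : ℝ => -s) (-1) x :=
        fun x _ => (hasDerivAt_id x).neg
      have hzero : Tendsto ((fun s : ℝ => -s) * deriv g) (nhdsWithin 0 (Iio 0)) (nhds 0) := by
        have : Tendsto ((fun s : ℝ => -s) * deriv g) (nhds 0) (nhds (-0 * deriv g 0)) := by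
          exact ((continuous_neg.mul hcg').tendsto 0)
        simpa using this.mono_left nhdsWithin_le_nhds
      have hbot : Tendsto ((fun s : ℝ => -s) * deriv g) atBot (nhds 0) :=
        myTendsto continuous_neg hcg' hcs.deriv _ atBot_le_cocompact
      have e := integral_Iic_mul_deriv_eq_deriv_mul hu (fun x _ => hd' x)
        (myIntg continuous_neg hcg'' hcs.deriv.deriv).integrableOn
        (myIntg (by fun_prop) hcg' hcs.deriv).integrableOn hzero hbot
      rw [e]
      have : ∫ x in Iic (0:ℝ), (-1 : ℝ) * deriv g x = -(g 0) := by
        rw [integral_const_mul, HasCompactSupport.integral_Iic_deriv_eq (hg.of_le h1) hcs 0]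
        ring
      rw [this]; ring
    -- Ioi side
    have hIoiVal : ∫ x in Ioi (0:ℝ), x * deriv (deriv g) x = g 0 := by
      have hu : ∀ x ∈ Ioi (0:ℝ), HasDerivAt (fun s : ℝ => s) 1 x := fun x _ => hasDerivAt_id x
      have hzero : Tendsto ((fun s : ℝ => s) * deriv g) (nhdsWithin 0 (Ioi 0)) (nhds 0) := by
        have : Tendsto ((fun s : ℝ => s) * deriv g) (nhds 0) (nhds (0 * deriv g 0)) :=
          (continuous_id.mul hcg').tendsto 0
        simpa using this.mono_left nhdsWithin_le_nhds
      have htop : Tendsto ((fun s : ℝ => s) * deriv g) atTop (nhds 0) :=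
        myTendsto continuous_id hcg' hcs.deriv _ atTop_le_cocompact
      have e := integral_Ioi_mul_deriv_eq_deriv_mul hu (fun x _ => hd' x)
        (myIntg continuous_id hcg'' hcs.deriv.deriv).integrableOn
        (myIntg (by fun_prop) hcg' hcs.deriv).integrableOn hzero htop
      rw [e]
      have : ∫ x in Ioi (0:ℝ), (1 : ℝ) * deriv g x = -(g 0) := by
        simp only [one_mul]
        rw [HasCompactSupport.integral_Ioi_deriv_eq (hg.of_le h1) hcs 0]
      rw [this]; ring
    rw [hIicEq, hIoiEq, hIicVal, hIoiVal]; ring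
  rw [hsplit, part1, part2]



/-- Sticky Brownian motion example (Section 7.1): with speed measure `m = δ₀ + λ`,
the function `U(x,t) = |x| + x² + t` is continuous, has initial value `|x| + x²`,
and solves `2m U_t = U_xx` in the distributional sense on `ℝ×(0,∞)`. -/
theorem sticky_example
    (U : ℝ → ℝ → ℝ) (hU : U = fun x t => |x| + x ^ 2 + t) :
    Continuous (uncurry U) ∧
    (∀ x : ℝ, U x 0 = |x| + x ^ 2) ∧
    SolvesHeat (Measure.dirac (0:ℝ) + volume) U := by
  subst hU
  refine ⟨?_, fun x => by simp, ?_⟩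
  · have h : uncurry (fun x t : ℝ => |x| + x ^ 2 + t)
        = fun p : ℝ × ℝ => |p.1| + p.1 ^ 2 + p.2 := rfl
    rw [h]
    fun_prop
  · intro φ hsm hcs hsupp
    show (-2) * (∫ x, (∫ t in Ioi (0:ℝ), (|x| + x ^ 2 + t) * deriv (φ x) t)
        ∂(Measure.dirac (0:ℝ) + volume))
      = ∫ x, ∫ t in Ioi (0:ℝ), (|x| + x ^ 2 + t) * iteratedDeriv 2 (fun y => φ y t) x

    have h1 : (1 : WithTop ℕ∞) ≤ ((⊤:ℕ∞) : WithTop ℕ∞) := by exact_mod_cast le_top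
    have hsm' : ContDiff ℝ ((⊤:ℕ∞) : WithTop ℕ∞) (uncurry φ) := hsm.of_le (by simp)
    have hφt : ∀ x, ContDiff ℝ ((⊤:ℕ∞) : WithTop ℕ∞) (φ x) :=
      fun x => hsm'.comp (contDiff_const.prodMk contDiff_id)
    have hφxs : ∀ t, ContDiff ℝ ((⊤:ℕ∞) : WithTop ℕ∞) (fun y => φ y t) :=
      fun t => hsm'.comp (contDiff_id.prodMk contDiff_const)
    -- supports
    have hcs_t : ∀ x, HasCompactSupport (φ x) := by
      intro x
      apply HasCompactSupport.intro (hcs.image continuous_snd)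
      intro t ht
      by_contra h
      exact ht ⟨(x, t), subset_tsupport _ h, rfl⟩
    have hcs_x : ∀ t, HasCompactSupport (fun y => φ y t) := by
      intro t
      apply HasCompactSupport.intro (hcs.image continuous_fst)
      intro x hx
      by_contra h
      exact hx ⟨(x, t), subset_tsupport _ h, rfl⟩
    have htIoi : ∀ x, tsupport (φ x) ⊆ Ioi 0 := by
      intro x
      have h1' : support (φ x) ⊆ {t | (x, t) ∈ tsupport (uncurry φ)} :=
        fun t ht => subset_tsupport _ ht
      have h2' : IsClosed {t | (x, t) ∈ tsupport (uncurry φ)} :=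
        (isClosed_tsupport (uncurry φ)).preimage (Continuous.prodMk_right x)
      exact fun t ht => (hsupp (closure_minimal h1' h2' ht)).2
    -- partial derivatives
    set F1 : ℝ × ℝ → ℝ := fun p => fderiv ℝ (uncurry φ) p (1, 0) with hF1def
    have hψd : ContDiff ℝ ((⊤:ℕ∞) : WithTop ℕ∞) (fderiv ℝ (uncurry φ)) :=
      hsm.fderiv_right (by simp)
    have hF1sm : ContDiff ℝ ((⊤:ℕ∞) : WithTop ℕ∞) F1 :=
      (ContinuousLinearMap.apply ℝ ℝ ((1:ℝ), (0:ℝ))).contDiff.comp hψd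
    have hF1cs : HasCompactSupport F1 := hcs.fderiv_apply ℝ ((1:ℝ),(0:ℝ))
    have hder1 : ∀ t x, HasDerivAt (fun y => φ y t) (F1 (x, t)) x := by
      intro t x
      exact ((hsm.differentiable (by simp) (x, t)).hasFDerivAt).comp_hasDerivAt x
        ((hasDerivAt_id x).prodMk (hasDerivAt_const x t))
    have hderiv1 : ∀ t, deriv (fun y => φ y t) = fun x => F1 (x, t) :=
      fun t => funext fun x => (hder1 t x).deriv
    set F2 : ℝ × ℝ → ℝ := fun p => fderiv ℝ F1 p (1, 0) with hF2def
    have hinf1 : ((⊤:ℕ∞) : WithTop ℕ∞) + 1 ≤ ((⊤:ℕ∞) : WithTop ℕ∞) := by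
      exact_mod_cast le_top
    have hF1d : ContDiff ℝ ((⊤:ℕ∞) : WithTop ℕ∞) (fderiv ℝ F1) := hF1sm.fderiv_right hinf1
    have hF2sm : ContDiff ℝ ((⊤:ℕ∞) : WithTop ℕ∞) F2 :=
      (ContinuousLinearMap.apply ℝ ℝ ((1:ℝ), (0:ℝ))).contDiff.comp hF1d
    have hF2cs : HasCompactSupport F2 := hF1cs.fderiv_apply ℝ ((1:ℝ),(0:ℝ))
    have hder2 : ∀ t x, HasDerivAt (fun y => F1 (y, t)) (F2 (x, t)) x := by
      intro t x
      exact ((hF1sm.differentiable (by simp) (x, t)).hasFDerivAt).comp_hasDerivAt x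
        ((hasDerivAt_id x).prodMk (hasDerivAt_const x t))
    have hderiv2 : ∀ t x, iteratedDeriv 2 (fun y => φ y t) x = F2 (x, t) := by
      intro t x
      rw [iteratedDeriv_succ, iteratedDeriv_one, hderiv1 t]
      exact (hder2 t x).deriv
    -- support of F2
    have hF2supp : ∀ p, p ∉ tsupport (uncurry φ) → F2 p = 0 := by
      intro p hp
      have hF1supp : support F1 ⊆ tsupport (uncurry φ) := by
        intro q hq
        have : fderiv ℝ (uncurry φ) q ≠ 0 := by
          intro h0
          apply hq
          simp [hF1def, h0]
        exact support_fderiv_subset ℝ this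
      have htsF1 : tsupport F1 ⊆ tsupport (uncurry φ) :=
        closure_minimal hF1supp (isClosed_tsupport _)
      have : fderiv ℝ F1 p = 0 := by
        by_contra h0
        exact hp (htsF1 (support_fderiv_subset ℝ h0))
      simp [hF2def, this]
    -- the function J
    set J : ℝ → ℝ := fun x => ∫ t, φ x t with hJdef
    have hJc : Continuous J := by
      obtain ⟨M, hM⟩ := hcs.exists_bound_of_continuous hsm.continuous
      set K2 : Set ℝ := Prod.snd '' tsupport (uncurry φ) with hK2def
      have hK2 : IsCompact K2 := hcs.image continuous_snd
      apply continuous_of_dominated (bound := K2.indicator fun _ => M)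
      · exact fun x => (hφt x).continuous.aestronglyMeasurable
      · intro x
        filter_upwards with t
        by_cases ht : t ∈ K2
        · rw [indicator_of_mem ht]
          exact hM (x, t)
        · have : φ x t = 0 := by
            by_contra h
            exact ht ⟨(x, t), subset_tsupport _ h, rfl⟩
          rw [indicator_of_notMem ht, this]
          simp
      · rw [integrable_indicator_iff hK2.isClosed.measurableSet]
        exact integrableOn_const hK2.measure_lt_top.ne
      · filter_upwards with t
        exact hsm.continuous.comp (continuous_id.prodMk continuous_const)
    have hJcs : HasCompactSupport J := by
      apply HasCompactSupport.intro (hcs.image continuous_fst)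
      intro x hx
      have : ∀ t, φ x t = 0 := by
        intro t
        by_contra h
        exact hx ⟨(x, t), subset_tsupport _ h, rfl⟩
      simp [hJdef, this]
    have hJint_d : Integrable J (Measure.dirac (0:ℝ)) :=
      hJc.integrable_of_hasCompactSupport hJcs
    have hJint_v : Integrable J (volume : Measure ℝ) :=
      hJc.integrable_of_hasCompactSupport hJcs
    -- inner t-integral on the LHS
    have hInner : ∀ x, (∫ t in Ioi (0:ℝ), (|x| + x ^ 2 + t) * deriv (φ x) t) = -(J x) := by
      intro x
      rw [setIntegral_eq_integral_of_forall_compl_eq_zero (fun t ht => ?_)]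
      · exact aux_t (|x| + x ^ 2) (φ x) (hφt x) (hcs_t x)
      · have hd0 : deriv (φ x) t = 0 := by
          by_contra h
          have hmem : t ∈ support (deriv (φ x)) := h
          exact ht (htIoi x (support_deriv_subset hmem))
        rw [hd0, mul_zero]
    -- the function G and Fubini on the RHS
    set G : ℝ × ℝ → ℝ := fun p => (|p.1| + p.1 ^ 2 + p.2) * F2 p with hGdef
    have hGcont : Continuous G := by
      apply Continuous.mul _ hF2sm.continuous
      fun_prop
    have hGcs : HasCompactSupport G := hF2cs.mul_left
    have hInner2 : ∀ x, (∫ t in Ioi (0:ℝ),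
        (|x| + x ^ 2 + t) * iteratedDeriv 2 (fun y => φ y t) x) = ∫ t, G (x, t) := by
      intro x
      have heq : ∀ t, (|x| + x ^ 2 + t) * iteratedDeriv 2 (fun y => φ y t) x = G (x, t) := by
        intro t
        rw [hderiv2 t x]
      simp_rw [heq]
      apply setIntegral_eq_integral_of_forall_compl_eq_zero
      intro t ht
      have : (x, t) ∉ tsupport (uncurry φ) := fun h => ht (hsupp h).2
      rw [hGdef]
      simp only []
      rw [hF2supp _ this, mul_zero]
    have hψint : Integrable (uncurry φ) ((volume : Measure ℝ).prod (volume : Measure ℝ)) := by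
      rw [← Measure.volume_eq_prod]
      exact hsm.continuous.integrable_of_hasCompactSupport hcs
    have hGint : Integrable G ((volume : Measure ℝ).prod (volume : Measure ℝ)) := by
      rw [← Measure.volume_eq_prod]
      exact hGcont.integrable_of_hasCompactSupport hGcs
    have hswapG : ∫ x, ∫ t, G (x, t) = ∫ t, ∫ x, G (x, t) :=
      integral_integral_swap hGint
    have hxint : ∀ t, (∫ x, G (x, t)) = 2 * φ 0 t + 2 * ∫ x, φ x t := by
      intro t
      have heq : ∀ x, G (x, t) = (|x| + x ^ 2 + t) * iteratedDeriv 2 (fun y => φ y t) x := by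
        intro x
        rw [hderiv2 t x]
      simp_rw [heq]
      exact aux_x t (fun y => φ y t) (hφxs t) (hcs_x t)
    have hintA : Integrable (fun t => (2:ℝ) * φ 0 t) :=
      myIntg continuous_const (hφt 0).continuous (hcs_t 0)
    have hintB : Integrable (fun t => (2:ℝ) * ∫ x, φ x t) :=
      (hψint.integral_prod_right).const_mul 2
    have hswapψ : ∫ x, ∫ t, φ x t = ∫ t, ∫ x, φ x t :=
      integral_integral_swap hψint
    -- assemble
    calc (-2) * (∫ x, (∫ t in Ioi (0:ℝ), (|x| + x ^ 2 + t) * deriv (φ x) t)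
          ∂(Measure.dirac (0:ℝ) + volume))
        = (-2) * (∫ x, -(J x) ∂(Measure.dirac (0:ℝ) + volume)) := by
          congr 1
          exact integral_congr_ae (Eventually.of_forall fun x => hInner x)
      _ = 2 * (J 0 + ∫ x, J x) := by
          rw [integral_neg, integral_add_measure hJint_d hJint_v, integral_dirac]
          ring
      _ = 2 * (∫ t, φ 0 t) + 2 * (∫ t, ∫ x, φ x t) := by
          rw [hJdef]
          simp only []
          rw [hswapψ]
          ring
      _ = ∫ t, (2 * φ 0 t + 2 * ∫ x, φ x t) := by
          rw [integral_add hintA hintB, integral_const_mul, integral_const_mul]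
      _ = ∫ t, ∫ x, G (x, t) := by
          congr 1
          funext t
          rw [hxint t]
      _ = ∫ x, ∫ t, G (x, t) := hswapG.symm
      _ = ∫ x, ∫ t in Ioi (0:ℝ), (|x| + x ^ 2 + t) * iteratedDeriv 2 (fun y => φ y t) x := by
          congr 1
          funext x
          rw [hInner2 x]
end
end

section
/- Let m = δ₀ + λ, where δ₀ is the Dirac measure at 0 and λ is Lebesgue measure on ℝ, and let U(x,t) = |x| + t + x² + e^{−t/2}(2 cos x − sin|x|) on ℝ×[0,∞). Then U is continuous, U(x,0) = |x| + x² + 2 cos x − sin|x| (which is a twice continuously differentiable function of x), U solves 2m U_t = U_xx in the distributional sense on ℝ×(0,∞), and yet for every t > 0 the map x ↦ U(x,t) is not differentiable at x = 0: the right derivative minus the left derivative at 0 equals 2 − 2e^{−t/2} > 0. -/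
open MeasureTheory Set Function Filter Topology
open scoped ContDiff

noncomputable section

def hker : ℝ → ℝ := fun x => |x| - Real.sin |x|
def D1 : ℝ → ℝ := fun x => if 0 ≤ x then 1 - Real.cos x else Real.cos x - 1

lemma hker_hasDeriv (x : ℝ) : HasDerivAt hker (D1 x) x := by
  rcases lt_trichotomy x 0 with hx | hx | hx
  · have hD : D1 x = Real.cos x - 1 := if_neg (not_le.2 hx)
    rw [hD]
    have h1 : HasDerivAt (fun y : ℝ => Real.sin y - y) (Real.cos x - 1) x :=
      (Real.hasDerivAt_sin x).sub (hasDerivAt_id x)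
    apply h1.congr_of_eventuallyEq
    filter_upwards [isOpen_Iio.mem_nhds hx] with y hy
    have : |y| = -y := abs_of_neg hy
    simp [hker, this, Real.sin_neg]
    ring
  · subst hx
    have hD : D1 0 = 0 := by simp [D1]
    rw [hD, hasDerivAt_iff_tendsto_slope]
    have h1 := (Real.hasDerivAt_sin 0)
    rw [hasDerivAt_iff_tendsto_slope] at h1
    rw [Real.cos_zero] at h1
    have h2 : Tendsto (fun y => slope Real.sin 0 y - 1) (𝓝[≠] (0:ℝ)) (𝓝 0) := by
      have := h1.sub (tendsto_const_nhds (x := (1:ℝ)))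
      simpa using this
    have h2n : Tendsto (fun y => ‖slope Real.sin 0 y - 1‖) (𝓝[≠] (0:ℝ)) (𝓝 0) := by
      simpa using h2.norm
    apply squeeze_zero_norm' _ h2n
    filter_upwards [self_mem_nhdsWithin] with y (hy : y ≠ 0)
    have hslope : slope hker 0 y = hker y / y := by
      simp [slope_def_field, hker]
    have hslope2 : slope Real.sin 0 y = Real.sin y / y := by
      simp [slope_def_field]
    rw [hslope, hslope2]
    rcases lt_or_gt_of_ne hy with h | h
    · have : hker y = -y + Real.sin y := by
        simp [hker, abs_of_neg h, Real.sin_neg]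
      rw [this]
      rw [show (-y + Real.sin y)/y = Real.sin y / y - 1 by field_simp; ring]
    · have : hker y = y - Real.sin y := by simp [hker, abs_of_pos h]
      rw [this]
      rw [show (y - Real.sin y)/y = -(Real.sin y / y - 1) by field_simp; ring]
      rw [norm_neg]
  · have hD : D1 x = 1 - Real.cos x := if_pos hx.le
    rw [hD]
    have h1 : HasDerivAt (fun y : ℝ => y - Real.sin y) (1 - Real.cos x) x :=
      (hasDerivAt_id x).sub (Real.hasDerivAt_sin x)
    apply h1.congr_of_eventuallyEq
    filter_upwards [isOpen_Ioi.mem_nhds hx] with y hy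
    simp [hker, abs_of_pos (mem_Ioi.mp hy)]

lemma D1_hasDeriv (x : ℝ) : HasDerivAt D1 (Real.sin |x|) x := by
  rcases lt_trichotomy x 0 with hx | hx | hx
  · have habs : Real.sin |x| = -Real.sin x := by rw [abs_of_neg hx, Real.sin_neg]
    rw [habs]
    have h1 : HasDerivAt (fun y : ℝ => Real.cos y - 1) (-Real.sin x) x :=
      (Real.hasDerivAt_cos x).sub_const 1
    apply h1.congr_of_eventuallyEq
    filter_upwards [isOpen_Iio.mem_nhds hx] with y (hy : y < 0)
    simp [D1, not_le.2 hy]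
  · subst hx
    have hD : Real.sin |(0:ℝ)| = 0 := by simp
    rw [hD, hasDerivAt_iff_tendsto_slope]
    have h1 := (Real.hasDerivAt_cos 0)
    rw [hasDerivAt_iff_tendsto_slope] at h1
    rw [Real.sin_zero, neg_zero] at h1
    have h2n : Tendsto (fun y => ‖slope Real.cos 0 y‖) (𝓝[≠] (0:ℝ)) (𝓝 0) := by
      simpa using h1.norm
    apply squeeze_zero_norm' _ h2n
    filter_upwards [self_mem_nhdsWithin] with y (hy : y ≠ 0)
    have hslope : slope D1 0 y = D1 y / y := by
      simp [slope_def_field, D1]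
    have hslope2 : slope Real.cos 0 y = (Real.cos y - 1) / y := by
      simp [slope_def_field]
    rw [hslope, hslope2]
    rcases lt_or_gt_of_ne hy with h | h
    · rw [show D1 y = Real.cos y - 1 from if_neg (not_le.2 h)]
    · rw [show D1 y = 1 - Real.cos y from if_pos h.le]
      rw [show (1 - Real.cos y)/y = -((Real.cos y - 1) / y) by ring]
      rw [norm_neg]
  · have habs : Real.sin |x| = Real.sin x := by rw [abs_of_pos hx]
    rw [habs]
    have h1 : HasDerivAt (fun y : ℝ => 1 - Real.cos y) (Real.sin x) x := by
      simpa using (Real.hasDerivAt_cos x).const_sub 1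
    apply h1.congr_of_eventuallyEq
    filter_upwards [isOpen_Ioi.mem_nhds hx] with y (hy : 0 < y)
    simp [D1, hy.le]

lemma hker_contDiff : ContDiff ℝ 2 hker := by
  have hd1 : deriv hker = D1 := funext fun x => (hker_hasDeriv x).deriv
  have hd2 : deriv D1 = fun x => Real.sin |x| := funext fun x => (D1_hasDeriv x).deriv
  rw [show (2 : WithTop ℕ∞) = 1 + 1 by norm_num, contDiff_succ_iff_deriv]
  refine ⟨fun x => (hker_hasDeriv x).differentiableAt, by simp, ?_⟩
  rw [hd1, contDiff_one_iff_deriv, hd2]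
  exact ⟨fun x => (D1_hasDeriv x).differentiableAt,
    Real.continuous_sin.comp continuous_abs⟩

/-- Sticky Brownian motion example with loss of regularity (Section 7.1):
with `m = δ₀ + λ` and `U(x,t) = |x| + t + x² + e^{−t/2}(2cos x − sin|x|)`: `U` is
continuous, its initial value `|x| + x² + 2cos x − sin|x|` is `C²` in `x`, `U` solves
`2m U_t = U_xx` distributionally, yet for every `t > 0` the map `x ↦ U(x,t)` is not
differentiable at `0`; the right minus the left derivative there is `2 − 2e^{−t/2} > 0`. -/
theorem sticky_example_kink
    (U : ℝ → ℝ → ℝ)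
    (hU : U = fun x t => |x| + t + x ^ 2 + Real.exp (-t / 2) * (2 * Real.cos x - Real.sin |x|)) :
    Continuous (uncurry U) ∧
    (∀ x : ℝ, U x 0 = |x| + x ^ 2 + 2 * Real.cos x - Real.sin |x|) ∧
    ContDiff ℝ 2 (fun x => U x 0) ∧
    SolvesHeat (Measure.dirac (0:ℝ) + volume) U ∧
    (∀ t > (0:ℝ),
      ¬ DifferentiableAt ℝ (fun x => U x t) 0 ∧
      ∃ dp dm : ℝ,
        HasDerivWithinAt (fun x => U x t) dp (Ici 0) 0 ∧
        HasDerivWithinAt (fun x => U x t) dm (Iic 0) 0 ∧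
        dp - dm = 2 - 2 * Real.exp (-t / 2) ∧
        0 < dp - dm) := by
  refine ⟨?_, ?_, ?_, ?_, ?_⟩
  · -- continuity
    rw [hU]
    have : (uncurry fun x t => |x| + t + x ^ 2 + Real.exp (-t / 2) * (2 * Real.cos x - Real.sin |x|))
        = fun p : ℝ × ℝ => |p.1| + p.2 + p.1 ^ 2
            + Real.exp (-p.2 / 2) * (2 * Real.cos p.1 - Real.sin |p.1|) := rfl
    rw [this]
    fun_prop
  · -- initial value
    intro x
    rw [hU]
    simp [Real.exp_zero]
    ring
  · -- C² initial value
    have hfn : (fun x => U x 0) = fun x => hker x + (x ^ 2 + 2 * Real.cos x) := by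
      funext x
      rw [hU]
      simp [hker, Real.exp_zero]
      ring
    rw [hfn]
    exact hker_contDiff.add ((contDiff_id.pow 2).add (contDiff_const.mul Real.contDiff_cos))
  · -- solves the heat equation distributionally
    intro φ hφ hφc hφs
    -- basic function c
    set c : ℝ → ℝ := fun x => 2 * Real.cos x - Real.sin |x| with hcdef
    have hc_cont : Continuous c := by fun_prop
    have hc0 : c 0 = 2 := by simp [hcdef]
    have hUv : ∀ x t : ℝ, U x t = |x| + t + x ^ 2 + Real.exp (-t / 2) * c x := by
      intro x t; rw [hU]
    have hU_cont : Continuous (fun p : ℝ × ℝ => U p.1 p.2) := by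
      rw [hU]
      fun_prop
    -- derivative machinery for φ
    have h1inf : (1:WithTop ℕ∞) ≤ ∞ := by exact_mod_cast le_top
    have hφ' : ContDiff ℝ ∞ (uncurry φ) := hφ.of_le (by simp)
    set φt : ℝ × ℝ → ℝ := fun p => fderiv ℝ (uncurry φ) p (0, 1) with hφtdef
    have hder_t : ∀ x t : ℝ, HasDerivAt (φ x) (φt (x, t)) t := by
      intro x t
      have h1 : HasDerivAt (fun s : ℝ => ((x, s) : ℝ × ℝ)) (0, 1) t :=
        (hasDerivAt_const t x).prodMk (hasDerivAt_id t)
      exact ((hφ'.differentiable (ENat.one_le_iff_ne_zero_withTop.mp h1inf) (x, t)).hasFDerivAt).comp_hasDerivAt t h1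
    have hφt_cont : Continuous φt :=
      ((hφ'.continuous_fderiv (ENat.one_le_iff_ne_zero_withTop.mp h1inf)).clm_apply continuous_const)
    set φx : ℝ × ℝ → ℝ := fun p => fderiv ℝ (uncurry φ) p (1, 0) with hφxdef
    have hφx_smooth : ContDiff ℝ ∞ φx :=
      (hφ'.fderiv_right (le_refl _)).clm_apply contDiff_const
    have hder_x : ∀ x t : ℝ, HasDerivAt (fun y => φ y t) (φx (x, t)) x := by
      intro x t
      have h1 : HasDerivAt (fun y : ℝ => ((y, t) : ℝ × ℝ)) (1, 0) x :=
        (hasDerivAt_id x).prodMk (hasDerivAt_const x t)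
      exact ((hφ'.differentiable (ENat.one_le_iff_ne_zero_withTop.mp h1inf) (x, t)).hasFDerivAt).comp_hasDerivAt x h1
    set φxx : ℝ × ℝ → ℝ := fun p => fderiv ℝ φx p (1, 0) with hφxxdef
    have hφxx_cont : Continuous φxx :=
      ((hφx_smooth.continuous_fderiv (ENat.one_le_iff_ne_zero_withTop.mp h1inf)).clm_apply continuous_const)
    have hder_xx : ∀ x t : ℝ, HasDerivAt (fun y => φx (y, t)) (φxx (x, t)) x := by
      intro x t
      have h1 : HasDerivAt (fun y : ℝ => ((y, t) : ℝ × ℝ)) (1, 0) x :=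
        (hasDerivAt_id x).prodMk (hasDerivAt_const x t)
      exact ((hφx_smooth.differentiable (ENat.one_le_iff_ne_zero_withTop.mp h1inf) (x, t)).hasFDerivAt).comp_hasDerivAt x h1
    have hiter : ∀ x t : ℝ, iteratedDeriv 2 (fun y => φ y t) x = φxx (x, t) := by
      intro x t
      rw [show (2:ℕ) = 1 + 1 from rfl, iteratedDeriv_succ, iteratedDeriv_one]
      have h1 : deriv (fun y => φ y t) = fun y => φx (y, t) :=
        funext fun y => (hder_x y t).deriv
      rw [h1]
      exact (hder_xx x t).deriv
    -- support box
    set K := tsupport (uncurry φ) with hKdef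
    have hKc : IsCompact K := hφc
    obtain ⟨ε, hε, T, M, hbox⟩ :
        ∃ ε > (0:ℝ), ∃ T M : ℝ, ∀ x t : ℝ, (x, t) ∈ K → |x| ≤ M ∧ ε ≤ t ∧ t ≤ T := by
      rcases K.eq_empty_or_nonempty with hemp | hne
      · exact ⟨1, one_pos, 0, 0, fun x t h => by rw [hemp] at h; exact absurd h (notMem_empty _)⟩
      · obtain ⟨p₀, hp₀K, hmin⟩ := hKc.exists_isMinOn hne continuous_snd.continuousOn
        have hε : 0 < p₀.2 := (hφs hp₀K).2
        obtain ⟨T, hT⟩ := (hKc.image continuous_snd).bddAbove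
        obtain ⟨M, hM⟩ := (hKc.image (continuous_abs.comp continuous_fst)).bddAbove
        exact ⟨p₀.2, hε, T, M, fun x t h =>
          ⟨hM (mem_image_of_mem _ h), hmin h, hT (mem_image_of_mem _ h)⟩⟩
    -- vanishing lemmas
    have hφ0 : ∀ p : ℝ × ℝ, p ∉ K → φ p.1 p.2 = 0 := fun p hp =>
      image_eq_zero_of_notMem_tsupport (f := uncurry φ) hp
    have hev : ∀ p : ℝ × ℝ, p ∉ K → uncurry φ =ᶠ[𝓝 p] 0 := by
      intro p hp
      filter_upwards [hKc.isClosed.isOpen_compl.mem_nhds hp] with q hq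
      exact hφ0 q hq
    have hφt0 : ∀ p : ℝ × ℝ, p ∉ K → φt p = 0 := by
      intro p hp
      rw [hφtdef]
      simp only
      rw [(hev p hp).fderiv_eq]
      have hz : fderiv ℝ (0 : ℝ × ℝ → ℝ) p = 0 := fderiv_const_apply 0
      rw [hz]
      simp
    have hφx0 : ∀ p : ℝ × ℝ, p ∉ K → φx p = 0 := by
      intro p hp
      rw [hφxdef]
      simp only
      rw [(hev p hp).fderiv_eq]
      have hz : fderiv ℝ (0 : ℝ × ℝ → ℝ) p = 0 := fderiv_const_apply 0
      rw [hz]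
      simp
    have hevx : ∀ p : ℝ × ℝ, p ∉ K → φx =ᶠ[𝓝 p] 0 := by
      intro p hp
      filter_upwards [hKc.isClosed.isOpen_compl.mem_nhds hp] with q hq
      exact hφx0 q hq
    have hφxx0 : ∀ p : ℝ × ℝ, p ∉ K → φxx p = 0 := by
      intro p hp
      rw [hφxxdef]
      simp only
      rw [(hevx p hp).fderiv_eq]
      have hz : fderiv ℝ (0 : ℝ × ℝ → ℝ) p = 0 := fderiv_const_apply 0
      rw [hz]
      simp
    -- the function q and its integral
    set q : ℝ → ℝ → ℝ := fun x t => (2 - Real.exp (-t/2) * c x) * φ x t with hqdef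
    have hq_cont : Continuous (uncurry q) := by
      apply Continuous.mul
      · fun_prop
      · exact hφ.continuous
    have hq0 : ∀ p : ℝ × ℝ, p ∉ K → q p.1 p.2 = 0 := by
      intro p hp
      rw [hqdef]
      simp only
      rw [hφ0 p hp, mul_zero]
    have hq_supp : HasCompactSupport (uncurry q) :=
      HasCompactSupport.intro hKc hq0
    set Qf : ℝ → ℝ := fun x => ∫ t, q x t with hQdef
    -- Claim A : per-x integration by parts in t
    have claimA : ∀ x : ℝ, (∫ t in Ioi (0:ℝ), U x t * deriv (φ x) t) = -(1/2) * Qf x := by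
      intro x
      have e1 : (∫ t in Ioi (0:ℝ), U x t * deriv (φ x) t)
          = ∫ t in Ioi (0:ℝ), U x t * φt (x, t) := by
        congr 1
        funext t
        rw [(hder_t x t).deriv]
      rw [e1]
      have hvan : ∀ t : ℝ, t ∉ Ioi (0:ℝ) → U x t * φt (x, t) = 0 := by
        intro t ht
        have hnK : (x, t) ∉ K := by
          intro hmem
          exact ht (lt_of_lt_of_le hε (hbox x t hmem).2.1)
        rw [hφt0 _ hnK, mul_zero]
      rw [setIntegral_eq_integral_of_forall_compl_eq_zero hvan]
      have hsupp1 : support (fun t => U x t * φt (x, t)) ⊆ Ioc 0 (T+1) := by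
        intro t ht
        by_contra hmem
        apply ht
        have hnK : (x, t) ∉ K := by
          intro hk
          obtain ⟨-, h1, h2⟩ := hbox x t hk
          exact hmem ⟨lt_of_lt_of_le hε h1, by linarith⟩
        simp only
        rw [hφt0 _ hnK, mul_zero]
      rw [← intervalIntegral.integral_eq_integral_of_support_subset hsupp1]
      have hu : ∀ s ∈ uIcc (0:ℝ) (T+1), HasDerivAt (fun r => U x r)
          (1 - Real.exp (-s/2) * c x / 2) s := by
        intro s _
        have h1 : HasDerivAt (fun r : ℝ => |x| + r + x ^ 2 + Real.exp (-r/2) * c x)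
            (1 - Real.exp (-s/2) * c x / 2) s := by
          have hexp : HasDerivAt (fun r : ℝ => Real.exp (-r/2)) (-(1/2) * Real.exp (-s/2)) s := by
            have h2 : HasDerivAt (fun r : ℝ => -r/2) (-(1/2) : ℝ) s := by
              have h3 := ((hasDerivAt_id s).neg.div_const 2)
              refine h3.congr_deriv ?_
              all_goals norm_num
            simpa [mul_comm] using h2.exp
          have := (((hasDerivAt_const s |x|).add (hasDerivAt_id s)).add_const (x ^ 2)).add
            (hexp.mul_const (c x))
          refine this.congr_deriv ?_
          ring
        apply h1.congr_of_eventuallyEq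
        filter_upwards with r
        rw [hUv]
      have hv : ∀ s ∈ uIcc (0:ℝ) (T+1), HasDerivAt (φ x) (φt (x, s)) s := fun s _ => hder_t x s
      have hiu : IntervalIntegrable (fun s => 1 - Real.exp (-s/2) * c x / 2) volume 0 (T+1) := by
        apply Continuous.intervalIntegrable
        fun_prop
      have hiv : IntervalIntegrable (fun s => φt (x, s)) volume 0 (T+1) :=
        (hφt_cont.comp (continuous_const.prodMk continuous_id)).intervalIntegrable _ _
      rw [intervalIntegral.integral_mul_deriv_eq_deriv_mul hu hv hiu hiv]
      have hb1 : φ x (T+1) = 0 := hφ0 (x, T+1) (fun hmem => by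
        have := (hbox _ _ hmem).2.2; linarith)
      have hb0 : φ x 0 = 0 := hφ0 (x, 0) (fun hmem => by
        have := (hbox _ _ hmem).2.1; linarith)
      rw [hb1, hb0, mul_zero, mul_zero, sub_zero, zero_sub]
      have e2 : ∫ s in (0:ℝ)..(T+1), (1 - Real.exp (-s/2) * c x / 2) * φ x s
          = (1/2) * ∫ s in (0:ℝ)..(T+1), q x s := by
        rw [← intervalIntegral.integral_const_mul]
        apply intervalIntegral.integral_congr
        intro s _
        simp only [hqdef]
        ring
      rw [e2]
      have hsupp2 : support (fun s => q x s) ⊆ Ioc 0 (T+1) := by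
        intro s hs
        by_contra hmem
        apply hs
        have hnK : (x, s) ∉ K := by
          intro hk
          obtain ⟨-, h1, h2⟩ := hbox x s hk
          exact hmem ⟨lt_of_lt_of_le hε h1, by linarith⟩
        exact hq0 (x, s) hnK
      rw [intervalIntegral.integral_eq_integral_of_support_subset hsupp2]
      rw [hQdef]
      ring
    -- Claim B : per-t integration by parts in x
    have claimB : ∀ t : ℝ, (∫ x, U x t * φxx (x, t))
        = (2 - 2 * Real.exp (-t/2)) * φ 0 t + ∫ x, q x t := by
      intro t
      set e := Real.exp (-t/2) with hedef
      set N : ℝ := |M| + 1 with hNdef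
      have hNpos : 0 < N := by positivity
      have hMN : M < N := lt_of_le_of_lt (le_abs_self M) (by rw [hNdef]; linarith)
      have hnotK : ∀ y s : ℝ, M < |y| → (y, s) ∉ K := fun y s hy hk =>
        absurd (hbox y s hk).1 (not_le.2 hy)
      set up : ℝ → ℝ := fun y => y + t + y^2 + e * (2*Real.cos y - Real.sin y) with hup
      set upd : ℝ → ℝ := fun y => 1 + 2*y + e * (-2*Real.sin y - Real.cos y) with hupd
      set updd : ℝ → ℝ := fun y => 2 + e * (-2*Real.cos y + Real.sin y) with hupdd
      set um : ℝ → ℝ := fun y => -y + t + y^2 + e * (2*Real.cos y + Real.sin y) with humm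
      set umd : ℝ → ℝ := fun y => -1 + 2*y + e * (-2*Real.sin y + Real.cos y) with humd
      set umdd : ℝ → ℝ := fun y => 2 + e * (-2*Real.cos y - Real.sin y) with humdd
      have hdup : ∀ y, HasDerivAt up (upd y) y := by
        intro y
        have h := (((hasDerivAt_id y).add_const t).add (hasDerivAt_pow 2 y)).add
          ((((Real.hasDerivAt_cos y).const_mul 2).sub (Real.hasDerivAt_sin y)).const_mul e)
        refine h.congr_deriv ?_
        simp only [hupd]
        push_cast
        ring
      have hdupd : ∀ y, HasDerivAt upd (updd y) y := by
        intro y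
        have h := ((hasDerivAt_id y).const_mul 2).const_add 1 |>.add
          ((((Real.hasDerivAt_sin y).const_mul (-2)).sub (Real.hasDerivAt_cos y)).const_mul e)
        refine h.congr_deriv ?_
        simp only [hupdd]
        push_cast
        ring
      have hdum : ∀ y, HasDerivAt um (umd y) y := by
        intro y
        have h := (((hasDerivAt_id y).neg.add_const t).add (hasDerivAt_pow 2 y)).add
          ((((Real.hasDerivAt_cos y).const_mul 2).add (Real.hasDerivAt_sin y)).const_mul e)
        refine h.congr_deriv ?_
        simp only [humd]
        push_cast
        ring
      have hdumd : ∀ y, HasDerivAt umd (umdd y) y := by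
        intro y
        have h := ((hasDerivAt_id y).const_mul 2).const_add (-1) |>.add
          ((((Real.hasDerivAt_sin y).const_mul (-2)).add (Real.hasDerivAt_cos y)).const_mul e)
        refine h.congr_deriv ?_
        simp only [humdd]
        push_cast
        ring
      have hvx : ∀ y : ℝ, HasDerivAt (fun z => φ z t) (φx (y, t)) y := fun y => hder_x y t
      have hvxx : ∀ y : ℝ, HasDerivAt (fun z => φx (z, t)) (φxx (y, t)) y := fun y => hder_xx y t
      have hcx : Continuous (fun y : ℝ => φx (y, t)) :=
        hφx_smooth.continuous.comp (continuous_id.prodMk continuous_const)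
      have hcxx : Continuous (fun y : ℝ => φxx (y, t)) :=
        hφxx_cont.comp (continuous_id.prodMk continuous_const)
      have hcphi : Continuous (fun y : ℝ => φ y t) :=
        hφ.continuous.comp (continuous_id.prodMk continuous_const)
      have hcU : Continuous (fun y : ℝ => U y t) :=
        hU_cont.comp (continuous_id.prodMk continuous_const)
      have habs : ∀ y : ℝ, ¬ (y ∈ Ioc (-N) N) → M < |y| := by
        intro y hy
        simp only [mem_Ioc, not_and_or, not_lt, not_le] at hy
        rcases hy with h | h
        · rw [abs_of_nonpos (by linarith : y ≤ 0)]
          linarith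
        · rw [abs_of_pos (by linarith : 0 < y)]
          linarith
      have hs1 : support (fun y => U y t * φxx (y, t)) ⊆ Ioc (-N) N := by
        intro y hy
        by_contra hmem
        apply hy
        simp only
        rw [hφxx0 _ (hnotK y t (habs y hmem)), mul_zero]
      rw [← intervalIntegral.integral_eq_integral_of_support_subset hs1]
      have hint1 : IntervalIntegrable (fun y => U y t * φxx (y, t)) volume (-N) 0 :=
        (hcU.mul hcxx).intervalIntegrable _ _
      have hint2 : IntervalIntegrable (fun y => U y t * φxx (y, t)) volume 0 N :=
        (hcU.mul hcxx).intervalIntegrable _ _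
      rw [← intervalIntegral.integral_add_adjacent_intervals hint1 hint2]
      have hbN : φ N t = 0 := hφ0 (N, t) (hnotK N t (by rw [abs_of_pos hNpos]; exact hMN))
      have hbNm : φ (-N) t = 0 := hφ0 (-N, t)
        (hnotK (-N) t (by rw [abs_neg, abs_of_pos hNpos]; exact hMN))
      have hbxN : φx (N, t) = 0 := hφx0 _ (hnotK N t (by rw [abs_of_pos hNpos]; exact hMN))
      have hbxNm : φx (-N, t) = 0 := hφx0 _
        (hnotK (-N) t (by rw [abs_neg, abs_of_pos hNpos]; exact hMN))
      have hqa : IntervalIntegrable (fun y => q y t) volume (-N) 0 :=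
        ((hq_cont.comp (continuous_id.prodMk continuous_const)).intervalIntegrable _ _)
      have hqb : IntervalIntegrable (fun y => q y t) volume 0 N :=
        ((hq_cont.comp (continuous_id.prodMk continuous_const)).intervalIntegrable _ _)
      have hright : ∫ y in (0:ℝ)..N, U y t * φxx (y, t)
          = -(up 0 * φx (0,t)) + upd 0 * φ 0 t + ∫ y in (0:ℝ)..N, q y t := by
        have e1 : ∫ y in (0:ℝ)..N, U y t * φxx (y, t) = ∫ y in (0:ℝ)..N, up y * φxx (y, t) := by
          apply intervalIntegral.integral_congr
          intro y hy
          rw [uIcc_of_le hNpos.le] at hy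
          simp only
          rw [hUv, hcdef]
          simp only
          rw [abs_of_nonneg hy.1, hup]
        rw [e1]
        rw [intervalIntegral.integral_mul_deriv_eq_deriv_mul (fun y _ => hdup y)
          (fun y _ => hvxx y)
          ((by rw [hupd]; fun_prop : Continuous upd).intervalIntegrable _ _)
          (hcxx.intervalIntegrable _ _)]
        rw [intervalIntegral.integral_mul_deriv_eq_deriv_mul (fun y _ => hdupd y)
          (fun y _ => hvx y)
          ((by rw [hupdd]; fun_prop : Continuous updd).intervalIntegrable _ _)
          (hcx.intervalIntegrable _ _)]
        have e2 : ∫ y in (0:ℝ)..N, updd y * φ y t = ∫ y in (0:ℝ)..N, q y t := by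
          apply intervalIntegral.integral_congr
          intro y hy
          rw [uIcc_of_le hNpos.le] at hy
          simp only [hqdef, hupdd, hcdef]
          rw [abs_of_nonneg hy.1]
          ring
        rw [hbxN, hbN, e2]
        ring
      have hleft : ∫ y in (-N)..(0:ℝ), U y t * φxx (y, t)
          = up 0 * φx (0,t) - umd 0 * φ 0 t + ∫ y in (-N)..(0:ℝ), q y t := by
        have e1 : ∫ y in (-N)..(0:ℝ), U y t * φxx (y, t)
            = ∫ y in (-N)..(0:ℝ), um y * φxx (y, t) := by
          apply intervalIntegral.integral_congr
          intro y hy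
          rw [uIcc_of_le (by linarith : -N ≤ (0:ℝ))] at hy
          simp only
          rw [hUv, hcdef]
          simp only
          rw [abs_of_nonpos hy.2, Real.sin_neg, humm]
          ring
        rw [e1]
        rw [intervalIntegral.integral_mul_deriv_eq_deriv_mul (fun y _ => hdum y)
          (fun y _ => hvxx y)
          ((by rw [humd]; fun_prop : Continuous umd).intervalIntegrable _ _)
          (hcxx.intervalIntegrable _ _)]
        rw [intervalIntegral.integral_mul_deriv_eq_deriv_mul (fun y _ => hdumd y)
          (fun y _ => hvx y)
          ((by rw [humdd]; fun_prop : Continuous umdd).intervalIntegrable _ _)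
          (hcx.intervalIntegrable _ _)]
        have e2 : ∫ y in (-N)..(0:ℝ), umdd y * φ y t = ∫ y in (-N)..(0:ℝ), q y t := by
          apply intervalIntegral.integral_congr
          intro y hy
          rw [uIcc_of_le (by linarith : -N ≤ (0:ℝ))] at hy
          simp only [hqdef, humdd, hcdef]
          rw [abs_of_nonpos hy.2, Real.sin_neg]
          ring
        rw [hbxNm, hbNm, e2]
        have hum0 : um 0 = up 0 := by simp [humm, hup]
        rw [hum0]
        ring
      rw [hleft, hright]
      have hqsum : (∫ y in (-N)..(0:ℝ), q y t) + ∫ y in (0:ℝ)..N, q y t = ∫ x, q x t := by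
        rw [intervalIntegral.integral_add_adjacent_intervals hqa hqb]
        apply intervalIntegral.integral_eq_integral_of_support_subset
        intro y hy
        by_contra hmem
        exact hy (hq0 (y, t) (hnotK y t (habs y hmem)))
      have hupd0 : upd 0 = 1 - e := by simp [hupd]; ring
      have humd0 : umd 0 = -1 + e := by simp [humd]
      rw [hupd0, humd0]
      linear_combination hqsum
    -- final assembly
    have hIeq : (fun x => ∫ t in Ioi (0:ℝ), U x t * deriv (φ x) t) = fun x => -(1/2) * Qf x :=
      funext claimA
    rw [hIeq]
    have hq_int : Integrable (uncurry q) (volume : Measure (ℝ × ℝ)) :=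
      hq_cont.integrable_of_hasCompactSupport hq_supp
    have hq_prod : Integrable (uncurry q) ((volume : Measure ℝ).prod volume) := by
      rwa [← Measure.volume_eq_prod]
    have hQf_int : Integrable Qf volume := hq_prod.integral_prod_left
    have hdint : Integrable (fun x => -(1/2) * Qf x) (Measure.dirac (0:ℝ)) := by
      refine (integrable_const (-(1/2) * Qf 0)).congr ?_
      rw [Filter.EventuallyEq, ae_dirac_eq]
      exact eventually_pure.2 rfl
    rw [integral_add_measure hdint (hQf_int.const_mul _), integral_dirac, integral_const_mul]
    have hRe : (fun x => ∫ t in Ioi (0:ℝ), U x t * iteratedDeriv 2 (fun y => φ y t) x)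
        = fun x => ∫ t, U x t * φxx (x, t) := by
      funext x
      have e1 : (∫ t in Ioi (0:ℝ), U x t * iteratedDeriv 2 (fun y => φ y t) x)
          = ∫ t in Ioi (0:ℝ), U x t * φxx (x, t) := by
        congr 1
        funext t
        rw [hiter x t]
      rw [e1]
      apply setIntegral_eq_integral_of_forall_compl_eq_zero
      intro t ht
      have hnK : (x, t) ∉ K := fun hk => ht (lt_of_lt_of_le hε (hbox x t hk).2.1)
      rw [hφxx0 _ hnK, mul_zero]
    rw [hRe]
    have hGc : Continuous (Function.uncurry fun (x t : ℝ) => U x t * φxx (x, t)) := by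
      have : (Function.uncurry fun (x t : ℝ) => U x t * φxx (x, t))
          = fun p : ℝ × ℝ => U p.1 p.2 * φxx p := by
        funext p
        rfl
      rw [this]
      exact hU_cont.mul hφxx_cont
    have hGs : HasCompactSupport (Function.uncurry fun (x t : ℝ) => U x t * φxx (x, t)) := by
      apply HasCompactSupport.intro hKc
      intro p hp
      have h0 : φxx p = 0 := hφxx0 p hp
      show U p.1 p.2 * φxx (p.1, p.2) = 0
      rw [show (p.1, p.2) = p from rfl, h0, mul_zero]
    rw [integral_integral_swap_of_hasCompactSupport hGc hGs]
    have hBeq : (fun t => ∫ x, U x t * φxx (x, t))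
        = fun t => (2 - 2 * Real.exp (-t/2)) * φ 0 t + ∫ x, q x t := funext claimB
    rw [hBeq]
    have hB1 : Integrable (fun t => (2 - 2 * Real.exp (-t/2)) * φ 0 t) volume := by
      apply Continuous.integrable_of_hasCompactSupport
      · have hc1 : Continuous (fun s : ℝ => φ 0 s) :=
          hφ.continuous.comp (continuous_const.prodMk continuous_id)
        fun_prop
      · apply HasCompactSupport.intro (isCompact_Icc (a := ε) (b := T))
        intro s hs
        have hnK : ((0:ℝ), s) ∉ K := fun hk => hs ⟨(hbox 0 s hk).2.1, (hbox 0 s hk).2.2⟩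
        rw [hφ0 _ hnK, mul_zero]
    have hB2 : Integrable (fun t => ∫ x, q x t) volume := hq_prod.integral_prod_right
    rw [integral_add hB1 hB2]
    have hfirst : (∫ t, (2 - 2 * Real.exp (-t/2)) * φ 0 t) = Qf 0 := by
      show _ = ∫ t, q 0 t
      congr 1
      funext s
      show _ = (2 - Real.exp (-s/2) * c 0) * φ 0 s
      rw [hc0]
      ring
    have hsecond : (∫ t, ∫ x, q x t) = ∫ x, Qf x :=
      (integral_integral_swap_of_hasCompactSupport hq_cont hq_supp).symm
    rw [hfirst, hsecond]
    ring
  · -- kink for t > 0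
    intro t ht
    have hfn : (fun x => U x t)
        = fun x => |x| + t + x ^ 2 + Real.exp (-t / 2) * (2 * Real.cos x - Real.sin |x|) := by
      funext x
      rw [hU]
    rw [hfn]
    set e := Real.exp (-t / 2) with he
    have he1 : e < 1 := by
      rw [he, show (1:ℝ) = Real.exp 0 by simp]
      exact Real.exp_lt_exp.2 (by linarith)
    have hdiff : (0:ℝ) < (1 - e) - -(1 - e) := by linarith
    have hp : HasDerivWithinAt (fun x => |x| + t + x ^ 2 + e * (2 * Real.cos x - Real.sin |x|))
        (1 - e) (Ici 0) 0 := by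
      have h1 : HasDerivAt (fun x : ℝ => x + t + x ^ 2 + e * (2 * Real.cos x - Real.sin x))
          (1 - e) 0 := by
        have := (((hasDerivAt_id (0:ℝ)).add_const t).add
            ((hasDerivAt_pow 2 (0:ℝ)))).add
            ((((Real.hasDerivAt_cos 0).const_mul 2).sub (Real.hasDerivAt_sin 0)).const_mul e)
        refine this.congr_deriv ?_
        simp
        ring
      apply h1.hasDerivWithinAt.congr
      · intro y hy
        rw [abs_of_nonneg (hy : (0:ℝ) ≤ y)]
      · simp
    have hm : HasDerivWithinAt (fun x => |x| + t + x ^ 2 + e * (2 * Real.cos x - Real.sin |x|))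
        (-(1 - e)) (Iic 0) 0 := by
      have h1 : HasDerivAt (fun x : ℝ => -x + t + x ^ 2 + e * (2 * Real.cos x + Real.sin x))
          (-(1 - e)) 0 := by
        have := (((hasDerivAt_id (0:ℝ)).neg.add_const t).add
            ((hasDerivAt_pow 2 (0:ℝ)))).add
            ((((Real.hasDerivAt_cos 0).const_mul 2).add (Real.hasDerivAt_sin 0)).const_mul e)
        refine this.congr_deriv ?_
        simp
        ring
      apply h1.hasDerivWithinAt.congr
      · intro y hy
        rw [abs_of_nonpos (hy : y ≤ (0:ℝ)), Real.sin_neg]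
        ring
      · simp
    refine ⟨?_, 1 - e, -(1 - e), hp, hm, by ring, hdiff⟩
    intro hdiffat
    have hd := hdiffat.hasDerivAt
    have h1 : derivWithin (fun x => |x| + t + x ^ 2 + e * (2 * Real.cos x - Real.sin |x|))
        (Ici 0) 0 = 1 - e := hp.derivWithin (uniqueDiffOn_Ici 0 0 (by simp))
    have h2 : derivWithin (fun x => |x| + t + x ^ 2 + e * (2 * Real.cos x - Real.sin |x|)) (Ici 0) 0
        = deriv (fun x => |x| + t + x ^ 2 + e * (2 * Real.cos x - Real.sin |x|)) 0 :=
      (hd.hasDerivWithinAt.derivWithin (uniqueDiffOn_Ici 0 0 (by simp)))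
    have h3 : derivWithin (fun x => |x| + t + x ^ 2 + e * (2 * Real.cos x - Real.sin |x|))
        (Iic 0) 0 = -(1 - e) := hm.derivWithin (uniqueDiffOn_Iic 0 0 (by simp))
    have h4 : derivWithin (fun x => |x| + t + x ^ 2 + e * (2 * Real.cos x - Real.sin |x|)) (Iic 0) 0
        = deriv (fun x => |x| + t + x ^ 2 + e * (2 * Real.cos x - Real.sin |x|)) 0 :=
      (hd.hasDerivWithinAt.derivWithin (uniqueDiffOn_Iic 0 0 (by simp)))
    rw [h2] at h1
    rw [h4] at h3
    rw [h1] at h3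
    linarith
end
end
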